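/- arXiv:1910.12563 — 5 statements merged into one kernel-verified Lean document; each statement's English description precedes it below -/
import Mathlib

section
/- Let H be a finite abelian group and S a generating inverse-closed subset of H with 0 ∉ S having the unique summation property. Let Γ = Cay(H; S) and G = Aut(Γ). Then the stabilizer G_0 of the vertex 0 equals Aut(H, S), the group of group automorphisms of H that map S onto S. In particular, every graph automorphism of Γ fixing 0 is an additive automorphism of H. -/
/-- The unique summation property for a subset of an additive abelian group. -/
def hasUS {G : Type*} [AddCommGroup G] (Ω : Set G) : Prop :=
  ∀ g : G, g ≠ 0 → ∀ s₁ ∈ Ω, ∀ s₂ ∈ Ω, ∀ s₃ ∈ Ω, ∀ s₄ ∈ Ω,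
    s₁ + s₂ = g → s₃ + s₄ = g → ({s₁, s₂} : Multiset G) = {s₃, s₄}

/-- The Cayley graph of an additive group `H` with connection set `S`:
vertices are elements of `H`, with `g` adjacent to `h` iff their difference lies in `S`. -/
def cayA (H : Type*) [AddGroup H] (S : Set H) : SimpleGraph H :=
  SimpleGraph.fromRel (fun g h => h - g ∈ S)

/-- The automorphism group of a graph, as a subgroup of the permutations of the vertices. -/
def graphAut {V : Type*} (Γ : SimpleGraph V) : Subgroup (Equiv.Perm V) where
  carrier := {f | ∀ a b, Γ.Adj (f a) (f b) ↔ Γ.Adj a b}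
  one_mem' := by intro a b; simp
  mul_mem' := by
    intro f g hf hg a b
    simp only [Equiv.Perm.mul_apply]
    exact (hf _ _).trans (hg a b)
  inv_mem' := by
    intro f hf a b
    conv_rhs => rw [← f.apply_symm_apply a, ← f.apply_symm_apply b]
    exact (hf _ _).symm

lemma pair_eq_pair' {α : Type*} {a b c d : α} (h : ({a,b} : Multiset α) = {c,d}) :
    (a = c ∧ b = d) ∨ (a = d ∧ b = c) := by
  simp only [Multiset.insert_eq_cons, Multiset.cons_eq_cons] at h
  rcases h with ⟨h1, h2⟩ | ⟨h1, cs, h2, h3⟩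
  · left; exact ⟨h1, by simpa using h2⟩
  · simp only [Multiset.singleton_eq_cons_iff] at h2 h3
    right; exact ⟨h3.1.symm, h2.1⟩

section aux

variable {H : Type*} [AddCommGroup H] {S : Set H}

/-- Unique "midpoint": if `z` is a common neighbour of `x` and `x + s + s`, then `z = x + s`. -/
lemma myMid (hus : hasUS S) {x z s : H} (hs : s ∈ S) (h2 : s + s ≠ 0)
    (h1 : z - x ∈ S) (h1' : x + s + s - z ∈ S) : z = x + s := by
  have key := hus (s + s) h2 (z - x) h1 (x + s + s - z) h1' s hs s hs (by abel) rfl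
  rcases pair_eq_pair' key with ⟨h, -⟩ | ⟨h, -⟩ <;>
  · rw [sub_eq_iff_eq_add] at h
    rw [h]; abel

/-- For a 0-fixing graph automorphism and `t ∈ S` with `2t ≠ 0`, `f (-t) = - f t`. -/
lemma negKey (hinv : ∀ s ∈ S, -s ∈ S) (hus : hasUS S) (f : Equiv.Perm H)
    (hD : ∀ a b : H, f b - f a ∈ S ↔ b - a ∈ S) (hf0 : f 0 = 0)
    {t : H} (ht : t ∈ S) (h2t : t + t ≠ 0) : f (-t) = - f t := by
  have ha : f t ∈ S := by
    have := (hD 0 t).2 (by simpa using ht); simpa [hf0] using this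
  have hb : f (-t) ∈ S := by
    have := (hD 0 (-t)).2 (by simpa using hinv t ht); simpa [hf0] using this
  set z : H := f.symm (f t + f (-t)) with hz
  have hfz : f z = f t + f (-t) := Equiv.apply_symm_apply f _
  have hz1 : z - (-t) ∈ S := by
    apply (hD (-t) z).1
    have e : f z - f (-t) = f t := by rw [hfz]; abel
    rw [e]; exact ha
  have hz2 : -t + t + t - z ∈ S := by
    have h' : t - z ∈ S := by
      apply (hD z t).1
      have e : f t - f z = -(f (-t)) := by rw [hfz]; abel
      rw [e]; exact hinv _ hb
    have e2 : -t + t + t - z = t - z := by abel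
    rw [e2]; exact h'
  have hz0 : z = 0 := by
    have := myMid hus ht h2t hz1 hz2
    rw [this]; abel
  have hsum : f t + f (-t) = 0 := by rw [← hfz, hz0, hf0]
  exact eq_neg_of_add_eq_zero_right hsum

end aux

theorem stmt10 {H : Type*} [AddCommGroup H] [Finite H] (S : Set H)
    (hgen : AddSubgroup.closure S = ⊤) (hinv : ∀ s ∈ S, -s ∈ S) (h0 : (0 : H) ∉ S)
    (hus : hasUS S) :
    {f : Equiv.Perm H | f ∈ graphAut (cayA H S) ∧ f 0 = 0} =
      {f : Equiv.Perm H | ∃ θ : AddAut H, AddAut.toPerm H θ = f ∧ ⇑θ '' S = S} := by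
  have adj_iff : ∀ g h : H, (cayA H S).Adj g h ↔ h - g ∈ S := by
    intro g h
    constructor
    · rintro ⟨hne, h1 | h1⟩
      · exact h1
      · have := hinv _ h1; rwa [neg_sub] at this
    · intro hs
      refine ⟨?_, Or.inl hs⟩
      rintro rfl
      rw [sub_self] at hs
      exact h0 hs
  ext f
  simp only [Set.mem_setOf_eq]
  constructor
  · rintro ⟨hfAut, hf0⟩
    have hD : ∀ a b : H, f b - f a ∈ S ↔ b - a ∈ S := fun a b => by
      have := hfAut a b; rwa [adj_iff, adj_iff] at this
    have hDsymm : ∀ a b : H, f.symm b - f.symm a ∈ S ↔ b - a ∈ S := fun a b => by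
      have := hD (f.symm a) (f.symm b)
      rw [Equiv.apply_symm_apply, Equiv.apply_symm_apply] at this
      exact this.symm
    have hsymm0 : f.symm 0 = 0 := by rw [Equiv.symm_apply_eq, hf0]
    have hfS : ∀ s : H, f s ∈ S ↔ s ∈ S := fun s => by
      have := hD 0 s; rw [hf0] at this; simpa using this
    -- negation lemma, covering also the order-2 case
    have hneg : ∀ t ∈ S, f (-t) = - f t := by
      intro t ht
      by_cases h2t : t + t = 0
      · have htt : -t = t := neg_eq_of_add_eq_zero_left h2t
        rw [htt]
        by_cases h2a : f t + f t = 0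
        · exact (neg_eq_of_add_eq_zero_left h2a).symm
        · exfalso
          have key := negKey hinv hus f.symm hDsymm hsymm0 ((hfS t).2 ht) h2a
          rw [Equiv.symm_apply_apply, htt] at key
          have := congrArg f key
          rw [Equiv.apply_symm_apply] at this
          exact h2a (neg_eq_iff_add_eq_zero.mp this)
      · exact negKey hinv hus f hD hf0 ht h2t
    -- key inductive step
    have hstep : ∀ x : H, (∀ s ∈ S, f (x + s) = f x + f s) →
        ∀ t ∈ S, ∀ s ∈ S, f (x + t + s) = f (x + t) + f s := by
      intro x ih t ht s hs
      by_cases hst0 : s + t = 0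
      · have hs' : s = -t := eq_neg_of_add_eq_zero_left hst0
        subst hs'
        rw [hneg t ht, ih t ht]
        have e : x + t + -t = x := by abel
        rw [e]; abel
      · by_cases hstt : s = t
        · subst hstt
          have hss : s + s ≠ 0 := hst0
          have hu : f (x + s + s) - f (x + s) ∈ S := by
            apply (hD (x + s) (x + s + s)).2
            have e : x + s + s - (x + s) = s := by abel
            rw [e]; exact hs
          set u := f (x + s + s) - f (x + s) with hu_def
          have hfxs : f (x + s) = f x + f s := ih s hs
          have hfxss : f (x + s + s) = f x + f s + u := by rw [hu_def, hfxs]; abel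
          have hz1 : f.symm (f x + u) - x ∈ S := by
            apply (hD x _).1
            rw [Equiv.apply_symm_apply]
            have e : f x + u - f x = u := by abel
            rw [e]; exact hu
          have hz2 : x + s + s - f.symm (f x + u) ∈ S := by
            apply (hD _ (x + s + s)).1
            rw [Equiv.apply_symm_apply, hfxss]
            have e : f x + f s + u - (f x + u) = f s := by abel
            rw [e]; exact (hfS s).2 hs
          have hzeq := myMid hus hs hss hz1 hz2
          have := congrArg f hzeq
          rw [Equiv.apply_symm_apply, hfxs] at this
          have hu_eq : u = f s := by
            have := add_left_cancel this
            exact this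
          rw [hfxss, hu_eq, hfxs]
        · -- s ≠ t, s + t ≠ 0
          have hu : f (x + t + s) - f (x + t) ∈ S := by
            apply (hD (x + t) (x + t + s)).2
            have e : x + t + s - (x + t) = s := by abel
            rw [e]; exact hs
          have hv : f (x + t + s) - f (x + s) ∈ S := by
            apply (hD (x + s) (x + t + s)).2
            have e : x + t + s - (x + s) = t := by abel
            rw [e]; exact ht
          set u := f (x + t + s) - f (x + t) with hu_def
          set v := f (x + t + s) - f (x + s) with hv_def
          have e1 : f t + u = f (x + t + s) - f x := by
            rw [hu_def, ih t ht]; abel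
          have e2 : f s + v = f (x + t + s) - f x := by
            rw [hv_def, ih s hs]; abel
          have gne : f (x + t + s) - f x ≠ 0 := by
            rw [sub_ne_zero]
            intro hEq
            apply hst0
            have h' : x + (t + s) = x + 0 := by
              rw [add_zero, ← add_assoc]; exact f.injective hEq
            have h'' := add_left_cancel h'
            rw [add_comm]; exact h''
          have key := hus _ gne (f t) ((hfS t).2 ht) u hu (f s) ((hfS s).2 hs) v hv e1 e2
          rcases pair_eq_pair' key with ⟨h1, -⟩ | ⟨-, h2⟩
          · exact absurd (f.injective h1).symm hstt
          · rw [← h2, hu_def]; abel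
    -- every element of H is a sum of a list of elements of S
    have hmem : ∀ x : H, x ∈ AddSubmonoid.closure S := by
      intro x
      have hSS : S ∪ -S = S := by
        apply Set.union_eq_self_of_subset_right
        intro y hy
        have : -y ∈ S := Set.mem_neg.mp hy
        simpa using hinv (-y) this
      have hx : x ∈ (AddSubgroup.closure S).toAddSubmonoid := by
        rw [hgen]; trivial
      rwa [AddSubgroup.closure_toAddSubmonoid, hSS] at hx
    have hQl : ∀ l : List H, (∀ y ∈ l, y ∈ S) →
        ∀ s ∈ S, f (l.sum + s) = f l.sum + f s := by
      intro l
      induction l with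
      | nil => intro _ s hs; simp [hf0]
      | cons a tl ih =>
        intro hl
        have e : (a :: tl).sum = tl.sum + a := by
          rw [List.sum_cons, add_comm]
        rw [e]
        exact hstep tl.sum (ih fun y hy => hl y (List.mem_cons_of_mem _ hy)) a
          (hl a List.mem_cons_self)
    have hQ : ∀ x : H, ∀ s ∈ S, f (x + s) = f x + f s := by
      intro x
      obtain ⟨l, hl, rfl⟩ := AddSubmonoid.exists_list_of_mem_closure (hmem x)
      exact hQl l hl
    have hadd : ∀ x y : H, f (x + y) = f x + f y := by
      intro x y
      obtain ⟨l, hl, rfl⟩ := AddSubmonoid.exists_list_of_mem_closure (hmem y)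
      induction l with
      | nil => simp [hf0]
      | cons a tl ih =>
        have ha := hl a List.mem_cons_self
        have ih' := ih fun y hy => hl y (List.mem_cons_of_mem _ hy)
        have e : (a :: tl).sum = tl.sum + a := by rw [List.sum_cons, add_comm]
        rw [e, ← add_assoc, hQ (x + tl.sum) a ha, ih', hQ tl.sum a ha, add_assoc]
    refine ⟨AddEquiv.mk' f hadd, ?_, ?_⟩
    · rfl
    · apply Set.Subset.antisymm
      · rintro y ⟨s, hs, rfl⟩
        exact (hfS s).2 hs
      · intro s hs
        refine ⟨f.symm s, ?_, ?_⟩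
        · apply (hfS (f.symm s)).1
          rw [Equiv.apply_symm_apply]; exact hs
        · exact Equiv.apply_symm_apply f s
  · rintro ⟨θ, rfl, hS⟩
    have hθS : ∀ x : H, θ x ∈ S ↔ x ∈ S := by
      intro x
      constructor
      · intro hx
        rw [← hS] at hx
        obtain ⟨y, hy, hxy⟩ := hx
        rwa [← θ.injective hxy]
      · intro hx
        rw [← hS]; exact ⟨x, hx, rfl⟩
    constructor
    · intro a b
      rw [adj_iff, adj_iff]
      show θ b - θ a ∈ S ↔ b - a ∈ S
      rw [← map_sub θ b a]
      exact hθS _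
    · show θ 0 = 0
      exact map_zero θ
end

section
/- Let H be a finite abelian group and S a generating inverse-closed subset of H with 0 ∉ S having the unique summation property. Then the automorphism group of Γ = Cay(H; S) is isomorphic to the semidirect product L(H) ⋊ Aut(H, S), where L(H) is the group of translations x ↦ v + x for v ∈ H and Aut(H, S) is the group of group automorphisms of H fixing S setwise. In particular, |Aut(Γ)| = |H| · |Aut(H, S)|. -/
/-- The multiplicative group structure (composition) on `AddAut A`, as in the older Mathlib. -/
instance addAutGroupOld (A : Type*) [Add A] : Group (AddAut A) where
  mul g h := AddEquiv.trans h g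
  one := AddEquiv.refl _
  inv := AddEquiv.symm
  mul_assoc _ _ _ := rfl
  one_mul _ := rfl
  mul_one _ := rfl
  inv_mul_cancel := AddEquiv.self_trans_symm

/-- The subgroup `Aut(H, S)` of additive automorphisms of `H` fixing `S` setwise. -/
def autHS (H : Type*) [AddCommGroup H] (S : Set H) : Subgroup (AddAut H) where
  carrier := {θ | ⇑θ '' S = S}
  one_mem' := by show ⇑(AddEquiv.refl H) '' S = S; simp [Set.image_id]
  mul_mem' := by
    intro a b ha hb
    show ⇑(a * b) '' S = S
    have h : ⇑(a * b) = ⇑a ∘ ⇑b := rfl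
    rw [h, Set.image_comp, hb, ha]
  inv_mem' := by
    intro a ha
    show ⇑a⁻¹ '' S = S
    conv_lhs => rw [← ha, ← Set.image_comp]
    have h : ⇑a⁻¹ ∘ ⇑a = id := by
      funext x
      exact a.toEquiv.symm_apply_apply x
    rw [h, Set.image_id]

/-- The natural map from additive automorphisms of `H` to multiplicative automorphisms
of `Multiplicative H`. -/
def addAutToMulAut {H : Type*} [AddCommGroup H] : AddAut H →* MulAut (Multiplicative H) where
  toFun θ := AddEquiv.toMultiplicative θ
  map_one' := by ext x; rfl
  map_mul' := by intro a b; ext x; rfl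

section Aux
variable {H : Type*} [AddCommGroup H] {S : Set H}

lemma multiset_pair_eq {a b c d : H} (h : ({a, b} : Multiset H) = {c, d}) :
    (a = c ∧ b = d) ∨ (a = d ∧ b = c) := by
  have ha : a ∈ ({c, d} : Multiset H) := h ▸ Multiset.mem_cons_self a {b}
  rcases Multiset.mem_cons.mp ha with h1 | h1
  · subst h1
    left
    exact ⟨rfl, Multiset.singleton_inj.mp ((Multiset.cons_inj_right a).mp h)⟩
  · rw [Multiset.mem_singleton] at h1
    subst h1
    right
    have h2 : ({a, b} : Multiset H) = {a, c} := by
      rw [h]; exact Multiset.cons_swap c a {}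
    exact ⟨rfl, Multiset.singleton_inj.mp ((Multiset.cons_inj_right a).mp h2)⟩

/-- The adjacency characterisation. -/
lemma cayA_adj (hinv : ∀ s ∈ S, -s ∈ S) (h0 : (0 : H) ∉ S) {g h : H} :
    (cayA H S).Adj g h ↔ h - g ∈ S := by
  show (SimpleGraph.fromRel _).Adj g h ↔ _
  rw [SimpleGraph.fromRel_adj]
  constructor
  · rintro ⟨hne, h1 | h1⟩
    · exact h1
    · have := hinv _ h1; rwa [neg_sub] at this
  · intro hs
    refine ⟨fun he => h0 ?_, Or.inl hs⟩
    rwa [he, sub_self] at hs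

/-- Being a graph automorphism of the Cayley graph. -/
def IsA (S : Set H) (f : Equiv.Perm H) : Prop :=
  ∀ a b, (cayA H S).Adj (f a) (f b) ↔ (cayA H S).Adj a b

lemma IsA.mul {f g : Equiv.Perm H} (hf : IsA S f) (hg : IsA S g) : IsA S (f * g) :=
  fun a b => (hf _ _).trans (hg a b)

lemma IsA.inv {f : Equiv.Perm H} (hf : IsA S f) : IsA S f⁻¹ := by
  intro a b
  have := (hf (f⁻¹ a) (f⁻¹ b)).symm
  simpa using this

lemma isA_addLeft (hinv : ∀ s ∈ S, -s ∈ S) (h0 : (0 : H) ∉ S) (v : H) :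
    IsA S (Equiv.addLeft v) := by
  intro a b
  rw [cayA_adj hinv h0, cayA_adj hinv h0]
  simp

lemma mapS (hinv : ∀ s ∈ S, -s ∈ S) (h0 : (0 : H) ∉ S) {f : Equiv.Perm H}
    (hf : IsA S f) (hf0 : f 0 = 0) {s : H} (hs : s ∈ S) : f s ∈ S := by
  have h1 : (cayA H S).Adj 0 s := (cayA_adj hinv h0).mpr (by simpa using hs)
  have h2 := (hf 0 s).mpr h1
  rw [hf0, cayA_adj hinv h0, sub_zero] at h2
  exact h2

variable (hinv : ∀ s ∈ S, -s ∈ S) (h0 : (0 : H) ∉ S) (hus : hasUS S)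
include hinv h0 hus

/-- The key lemma: automorphisms fixing 0 preserve sums of two generators. -/
lemma keyK {f : Equiv.Perm H} (hf : IsA S f) (hf0 : f 0 = 0)
    {s t : H} (hs : s ∈ S) (ht : t ∈ S) (hst : s + t ≠ 0) :
    f (s + t) = f s + f t := by
  have hfs : f s ∈ S := mapS hinv h0 hf hf0 hs
  have hft : f t ∈ S := mapS hinv h0 hf hf0 ht
  have hu : f (s + t) - f s ∈ S := by
    have h1 : (cayA H S).Adj s (s + t) := (cayA_adj hinv h0).mpr (by simpa using ht)
    have h2 := (hf s (s + t)).mpr h1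
    rwa [cayA_adj hinv h0] at h2
  have hv : f (s + t) - f t ∈ S := by
    have h1 : (cayA H S).Adj t (s + t) := (cayA_adj hinv h0).mpr (by simpa using hs)
    have h2 := (hf t (s + t)).mpr h1
    rwa [cayA_adj hinv h0] at h2
  have hfg0 : f (s + t) ≠ 0 := fun h => hst (f.injective (h.trans hf0.symm))
  by_cases hstEq : f s = f t
  · -- then s = t
    have hseqt : s = t := f.injective hstEq
    subst hseqt
    by_cases huu : f (s + s) - f s = f s
    · exact sub_eq_iff_eq_add'.mp huu
    · exfalso
      set u := f (s + s) - f s with hudef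
      have huS : u ∈ S := hu
      have hfi0 : f⁻¹ (0 : H) = 0 := by
        rw [Equiv.Perm.inv_eq_iff_eq]; exact hf0.symm
      have hfiu : f⁻¹ u ∈ S := mapS hinv h0 hf.inv hfi0 huS
      have hadj : (cayA H S).Adj u (f (s + s)) := by
        rw [cayA_adj hinv h0]
        have : f (s + s) - u = f s := by rw [hudef]; abel
        rw [this]; exact hfs
      have h3 := (hf.inv u (f (s + s))).mpr hadj
      rw [show f⁻¹ (f (s + s)) = s + s from f.symm_apply_apply _] at h3
      rw [cayA_adj hinv h0] at h3
      have hUS := hus (s + s) hst (f⁻¹ u) hfiu ((s + s) - f⁻¹ u) h3 s hs s hs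
        (by abel) rfl
      rcases multiset_pair_eq hUS with ⟨h4, _⟩ | ⟨h4, _⟩ <;>
      · apply huu
        show u = f s
        rw [← h4, show f (f⁻¹ u) = u from f.apply_symm_apply u]
  · have h1 : f s + (f (s + t) - f s) = f (s + t) := by abel
    have h2 : f t + (f (s + t) - f t) = f (s + t) := by abel
    have hUS := hus (f (s + t)) hfg0 (f s) hfs _ hu (f t) hft _ hv h1 h2
    rcases multiset_pair_eq hUS with ⟨h4, _⟩ | ⟨h4, h5⟩
    · exact absurd h4 hstEq
    · exact sub_eq_iff_eq_add'.mp h5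

/-- Automorphisms fixing 0 preserve negation of generators. -/
lemma keyNeg {f : Equiv.Perm H} (hf : IsA S f) (hf0 : f 0 = 0)
    {s : H} (hs : s ∈ S) : f (-s) = -f s := by
  have hns : -s ∈ S := hinv s hs
  have hfs : f s ∈ S := mapS hinv h0 hf hf0 hs
  have hfns : f (-s) ∈ S := mapS hinv h0 hf hf0 hns
  have hfi0 : f⁻¹ (0 : H) = 0 := by
    rw [Equiv.Perm.inv_eq_iff_eq]; exact hf0.symm
  rw [eq_neg_iff_add_eq_zero, add_comm]
  by_contra hne
  have := keyK hinv h0 hus hf.inv hfi0 hfs hfns hne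
  rw [show f⁻¹ (f s) = s from f.symm_apply_apply s, show f⁻¹ (f (-s)) = -s from f.symm_apply_apply _, add_neg_cancel] at this
  exact hne (by
    have := congrArg f this
    rwa [show f (f⁻¹ (f s + f (-s))) = f s + f (-s) from f.apply_symm_apply _, hf0] at this)

/-- Automorphisms fixing 0 preserve sums of two generators (all cases). -/
lemma keyK' {f : Equiv.Perm H} (hf : IsA S f) (hf0 : f 0 = 0)
    {s t : H} (hs : s ∈ S) (ht : t ∈ S) : f (s + t) = f s + f t := by
  by_cases hst : s + t = 0
  · have : t = -s := eq_neg_of_add_eq_zero_left (by rwa [add_comm])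
    subst this
    rw [add_neg_cancel, hf0, keyNeg hinv h0 hus hf hf0 hs, add_neg_cancel]
  · exact keyK hinv h0 hus hf hf0 hs ht hst

variable (hgen : AddSubgroup.closure S = ⊤)
include hgen

/-- For every x, every automorphism fixing 0 satisfies f (x + s) = f x + f s for s ∈ S. -/
lemma stepQ : ∀ x : H, ∀ f : Equiv.Perm H, IsA S f → f 0 = 0 →
    ∀ s ∈ S, f (x + s) = f x + f s := by
  have hmem : ∀ x : H, x ∈ AddSubgroup.closure S := fun x => hgen ▸ AddSubgroup.mem_top x
  intro x
  induction hmem x using AddSubgroup.closure_induction with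
  | mem t ht =>
    intro f hf hf0 s hs
    exact keyK' hinv h0 hus hf hf0 ht hs
  | zero =>
    intro f hf hf0 s hs
    rw [zero_add, hf0, zero_add]
  | add x y hx hy Qx Qy =>
    intro f hf hf0 s hs
    -- translated automorphism g z = -(f x) + f (x + z)
    set g : Equiv.Perm H := Equiv.addLeft (-(f x)) * f * Equiv.addLeft x with hg
    have hgIsA : IsA S g := ((isA_addLeft hinv h0 (-(f x))).mul hf).mul (isA_addLeft hinv h0 x)
    have hgapp : ∀ z, g z = -(f x) + f (x + z) := fun z => rfl
    have hg0 : g 0 = 0 := by rw [hgapp, add_zero, neg_add_cancel]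
    have h1 := Qy g hgIsA hg0 s hs
    rw [hgapp, hgapp, hgapp] at h1
    have h2 : f (x + s) = f x + f s := Qx f hf hf0 s hs
    rw [h2, neg_add_cancel_left, add_assoc (-(f x))] at h1
    rw [add_assoc]
    exact add_left_cancel h1
  | neg x hx Qx =>
    intro f hf hf0 s hs
    set g : Equiv.Perm H := Equiv.addLeft (-(f (-x))) * f * Equiv.addLeft (-x) with hg
    have hgIsA : IsA S g := ((isA_addLeft hinv h0 (-(f (-x)))).mul hf).mul (isA_addLeft hinv h0 (-x))
    have hgapp : ∀ z, g z = -(f (-x)) + f (-x + z) := fun z => rfl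
    have hg0 : g 0 = 0 := by rw [hgapp, add_zero, neg_add_cancel]
    have h1 := Qx g hgIsA hg0 s hs
    rw [hgapp, hgapp, hgapp] at h1
    rw [neg_add_cancel_left, neg_add_cancel, hf0, add_zero] at h1
    have h2 := add_left_cancel h1
    -- h2 : f s = -(f (-x)) + f (-x + s)
    have h3 := congrArg (fun z => f (-x) + z) h2
    simp only [add_neg_cancel_left] at h3
    exact h3.symm

/-- Full additivity of automorphisms fixing 0. -/
lemma fullAdd {f : Equiv.Perm H} (hf : IsA S f) (hf0 : f 0 = 0) :
    ∀ x y : H, f (x + y) = f x + f y := by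
  have hmem : ∀ y : H, y ∈ AddSubgroup.closure S := fun y => hgen ▸ AddSubgroup.mem_top y
  intro x y
  induction hmem y using AddSubgroup.closure_induction generalizing x with
  | mem t ht => exact stepQ hinv h0 hus hgen x f hf hf0 t ht
  | zero => rw [add_zero, hf0, add_zero]
  | add y z hy hz Py Pz =>
    have h1 : f (x + (y + z)) = f (x + y) + f z := by
      rw [← add_assoc]; exact Pz (x + y)
    rw [h1, Py x, Pz y, add_assoc]
  | neg y hy Py =>
    have hneg : f (-y) = -f y := by
      have h1 := Py (-y)
      rw [neg_add_cancel, hf0] at h1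
      exact eq_neg_of_add_eq_zero_left h1.symm
    have h2 := Py (x + -y)
    rw [add_assoc, neg_add_cancel, add_zero] at h2
    rw [hneg]
    exact (eq_sub_of_add_eq h2.symm).trans (sub_eq_add_neg _ _)

end Aux


theorem stmt11 {H : Type*} [AddCommGroup H] [Finite H] (S : Set H)
    (hgen : AddSubgroup.closure S = ⊤) (hinv : ∀ s ∈ S, -s ∈ S) (h0 : (0 : H) ∉ S)
    (hus : hasUS S) :
    Nonempty ((graphAut (cayA H S)) ≃*
      SemidirectProduct (Multiplicative H) (autHS H S)
        (addAutToMulAut.comp (autHS H S).subtype)) ∧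
    Nat.card (graphAut (cayA H S)) = Nat.card H * Nat.card (autHS H S) := by
  classical
  -- the translation homomorphism
  have memT : ∀ v : H, Equiv.addLeft v ∈ graphAut (cayA H S) :=
    fun v => isA_addLeft hinv h0 v
  let T : Multiplicative H →* graphAut (cayA H S) :=
  { toFun := fun v => ⟨Equiv.addLeft v.toAdd, memT _⟩
    map_one' := by
      apply Subtype.ext
      apply Equiv.ext
      intro z
      show (0 : H) + z = z
      rw [zero_add]
    map_mul' := by
      intro a b
      apply Subtype.ext
      apply Equiv.ext
      intro z
      show (a.toAdd + b.toAdd) + z = a.toAdd + (b.toAdd + z)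
      rw [add_assoc] }
  -- membership in autHS transfers
  have autHS_mem_iff : ∀ (θ : autHS H S) (x : H), θ.val x ∈ S ↔ x ∈ S := by
    intro θ x
    constructor
    · intro hx
      have hx' : θ.val x ∈ ⇑θ.val '' S := θ.prop.symm ▸ hx
      rcases hx' with ⟨y, hy, hxy⟩
      rwa [← θ.val.injective hxy]
    · intro hx
      have : θ.val x ∈ ⇑θ.val '' S := Set.mem_image_of_mem _ hx
      rwa [θ.prop] at this
  have memJ : ∀ θ : autHS H S, (θ.val.toEquiv : Equiv.Perm H) ∈ graphAut (cayA H S) := by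
    intro θ a b
    show (cayA H S).Adj (θ.val a) (θ.val b) ↔ _
    rw [cayA_adj hinv h0, cayA_adj hinv h0, ← map_sub θ.val b a]
    exact autHS_mem_iff θ (b - a)
  let J : autHS H S →* graphAut (cayA H S) :=
  { toFun := fun θ => ⟨θ.val.toEquiv, memJ θ⟩
    map_one' := Subtype.ext (Equiv.ext fun z => rfl)
    map_mul' := fun a b => Subtype.ext (Equiv.ext fun z => rfl) }
  have compat : ∀ g : autHS H S,
      T.comp (((addAutToMulAut.comp (autHS H S).subtype) g) : MulAut (Multiplicative H)).toMonoidHom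
        = (MulAut.conj (J g)).toMonoidHom.comp T := by
    intro g
    apply MonoidHom.ext
    intro v
    apply Subtype.ext
    apply Equiv.ext
    intro z
    show g.val (v.toAdd) + z = _
    have hco : ((MulAut.conj (J g)) (T v) : graphAut (cayA H S))
        = J g * T v * (J g)⁻¹ := rfl
    rw [MonoidHom.comp_apply]
    rw [MulEquiv.coe_toMonoidHom]
    rw [hco]
    show _ = g.val ((v.toAdd) + (g.val.toEquiv.symm z))
    rw [map_add]
    congr 1
    exact (g.val.apply_symm_apply z).symm
  let φL := SemidirectProduct.lift T J compat
  have hφL : ∀ x, φL x = T x.left * J x.right := by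
    intro x
    rw [← SemidirectProduct.inl_left_mul_inr_right x, map_mul,
      SemidirectProduct.lift_inl, SemidirectProduct.lift_inr]
    simp
  have hinj : Function.Injective φL := by
    rw [injective_iff_map_eq_one]
    intro x hx1
    rw [hφL x] at hx1
    have hval := congrArg (fun (u : graphAut (cayA H S)) => (u : Equiv.Perm H)) hx1
    have happ : ∀ z : H, x.left.toAdd + x.right.val z = z := by
      intro z
      exact congrFun (congrArg (fun (e : Equiv.Perm H) => (e : H → H)) hval) z
    have h00 := happ 0
    rw [map_zero, add_zero] at h00
    have hleft : x.left = 1 := h00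
    have hright : x.right = 1 := by
      apply Subtype.ext
      apply AddEquiv.ext
      intro z
      have := happ z
      rw [h00, zero_add] at this
      exact this
    cases x
    simp only at hleft hright
    rw [hleft, hright]
    rfl
  have hsurj : Function.Surjective φL := by
    intro F
    have hF : IsA S (F : Equiv.Perm H) := F.prop
    set v : H := (F : Equiv.Perm H) 0 with hv
    set f : Equiv.Perm H := Equiv.addLeft (-v) * (F : Equiv.Perm H) with hfdef
    have hfIsA : IsA S f := (isA_addLeft hinv h0 (-v)).mul hF
    have hf0 : f 0 = 0 := by
      show -v + (F : Equiv.Perm H) 0 = 0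
      rw [← hv, neg_add_cancel]
    have hAdd := fullAdd hinv h0 hus hgen hfIsA hf0
    have hfi0 : f⁻¹ (0 : H) = 0 := by
      rw [Equiv.Perm.inv_eq_iff_eq]; exact hf0.symm
    let θ : AddAut H := AddEquiv.mk' (f : H ≃ H) hAdd
    have hθmem : θ ∈ autHS H S := by
      show ⇑θ '' S = S
      have hcoe : ⇑θ = ⇑f := rfl
      rw [hcoe]
      apply Set.Subset.antisymm
      · rintro _ ⟨s, hs, rfl⟩
        exact mapS hinv h0 hfIsA hf0 hs
      · intro s hs
        exact ⟨f⁻¹ s, mapS hinv h0 hfIsA.inv hfi0 hs, f.apply_symm_apply s⟩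
    refine ⟨⟨Multiplicative.ofAdd v, ⟨θ, hθmem⟩⟩, ?_⟩
    rw [hφL]
    apply Subtype.ext
    apply Equiv.ext
    intro z
    show v + f z = (F : Equiv.Perm H) z
    show v + (-v + (F : Equiv.Perm H) z) = _
    rw [add_neg_cancel_left]
  let e := MulEquiv.ofBijective φL ⟨hinj, hsurj⟩
  constructor
  · exact ⟨e.symm⟩
  · have h1 : Nat.card (graphAut (cayA H S))
        = Nat.card (SemidirectProduct (Multiplicative H) (autHS H S)
            (addAutToMulAut.comp (autHS H S).subtype)) :=
      Nat.card_congr e.toEquiv.symm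
    have h2 : Nat.card (SemidirectProduct (Multiplicative H) (autHS H S)
            (addAutToMulAut.comp (autHS H S).subtype))
        = Nat.card (Multiplicative H × autHS H S) :=
      Nat.card_congr ⟨fun x => (x.left, x.right), fun p => ⟨p.1, p.2⟩,
        fun x => rfl, fun p => rfl⟩
    have h3 : Nat.card (Multiplicative H) = Nat.card H :=
      Nat.card_congr ⟨Multiplicative.toAdd, Multiplicative.ofAdd, fun x => rfl, fun x => rfl⟩
    rw [h1, h2, Nat.card_prod, h3]
end

section
/- Let n = c·d^m where c, d, m are integers with 1 ≤ c < d, d ≥ 5, m ≥ 1. Let Ω be an inverse-closed subset of {±1, ..., ±d^{m-1}} ⊆ ℤ_n containing {1, -1}. Then Aut(Cay(ℤ_n; Ω)) is isomorphic to the dihedral group D_{2n} of order 2n. -/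
section intlemmas
variable {d : ℕ}

private lemma pow_ge (hd : 5 ≤ d) {j : ℕ} (hj : 1 ≤ j) : d ≤ d ^ j := by
  calc d = d ^ 1 := (pow_one d).symm
  _ ≤ d ^ j := Nat.pow_le_pow_right (by omega) hj

private lemma dvd_contra (hd : 5 ≤ d) {x y k : ℕ} (h1 : d ∣ x) (h2 : d ∣ y)
    (h : x = y + k) (hk1 : 1 ≤ k) (hk4 : k ≤ 4) : False := by
  have h3 : d ∣ x - y := Nat.dvd_sub h1 h2
  rw [show x - y = k by omega] at h3
  have := Nat.le_of_dvd (by omega) h3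
  omega

private lemma cancel_d (hd : 5 ≤ d) {x y : ℕ} (h : x * d = y * d) : x = y :=
  Nat.eq_of_mul_eq_mul_right (by omega) h

/-- `d^a + d^b = d^i + d^j` forces matching exponents. -/
private lemma auxN1 (hd : 5 ≤ d) :
    ∀ s a b i j : ℕ, a + b + i + j ≤ s → d ^ a + d ^ b = d ^ i + d ^ j →
      (a = i ∧ b = j) ∨ (a = j ∧ b = i) := by
  intro s
  induction s with
  | zero =>
    intro a b i j hs _
    left; omega
  | succ s ih =>
    intro a b i j hs h
    have hdvd : ∀ x : ℕ, 1 ≤ x → d ∣ d ^ x := fun x hx => dvd_pow_self d (by omega)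
    rcases Nat.eq_zero_or_pos a with ha | ha <;>
      rcases Nat.eq_zero_or_pos b with hb | hb <;>
      rcases Nat.eq_zero_or_pos i with hi | hi <;>
      rcases Nat.eq_zero_or_pos j with hj | hj
    -- a=0,b=0,i=0,j=0
    · left; omega
    -- a=0,b=0,i=0,j≥1
    · subst ha hb hi
      simp only [pow_zero] at h
      have := pow_ge hd hj; omega
    -- a=0,b=0,i≥1,j=0
    · subst ha hb hj
      simp only [pow_zero] at h
      have := pow_ge hd hi; omega
    -- a=0,b=0,i,j≥1
    · subst ha hb
      simp only [pow_zero] at h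
      have := pow_ge hd hi; have := pow_ge hd hj; omega
    -- a=0,b≥1,i=0,j=0
    · subst ha hi hj
      simp only [pow_zero] at h
      have := pow_ge hd hb; omega
    -- a=0,b≥1,i=0,j≥1
    · subst ha hi
      simp only [pow_zero] at h
      have : b = j := Nat.pow_right_injective (by omega) (show d ^ b = d ^ j by omega)
      left; omega
    -- a=0,b≥1,i≥1,j=0
    · subst ha hj
      simp only [pow_zero] at h
      have : b = i := Nat.pow_right_injective (by omega) (show d ^ b = d ^ i by omega)
      right; omega
    -- a=0,b≥1,i≥1,j≥1
    · subst ha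
      simp only [pow_zero] at h
      exact (dvd_contra hd (k := 1) (Dvd.dvd.add (hdvd i hi) (hdvd j hj))
        (hdvd b hb) (by omega) (by omega) (by omega)).elim
    -- a≥1,b=0,i=0,j=0
    · subst hb hi hj
      simp only [pow_zero] at h
      have := pow_ge hd ha; omega
    -- a≥1,b=0,i=0,j≥1
    · subst hb hi
      simp only [pow_zero] at h
      have : a = j := Nat.pow_right_injective (by omega) (show d ^ a = d ^ j by omega)
      right; omega
    -- a≥1,b=0,i≥1,j=0
    · subst hb hj
      simp only [pow_zero] at h
      have : a = i := Nat.pow_right_injective (by omega) (show d ^ a = d ^ i by omega)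
      left; omega
    -- a≥1,b=0,i≥1,j≥1
    · subst hb
      simp only [pow_zero] at h
      exact (dvd_contra hd (k := 1) (Dvd.dvd.add (hdvd i hi) (hdvd j hj))
        (hdvd a ha) (by omega) (by omega) (by omega)).elim
    -- a≥1,b≥1,i=0,j=0
    · subst hi hj
      simp only [pow_zero] at h
      exact (dvd_contra hd (k := 2) (Dvd.dvd.add (hdvd a ha) (hdvd b hb))
        (dvd_zero d) (by omega) (by omega) (by omega)).elim
    -- a≥1,b≥1,i=0,j≥1
    · subst hi
      simp only [pow_zero] at h
      exact (dvd_contra hd (k := 1) (Dvd.dvd.add (hdvd a ha) (hdvd b hb))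
        (hdvd j hj) (by omega) (by omega) (by omega)).elim
    -- a≥1,b≥1,i≥1,j=0
    · subst hj
      simp only [pow_zero] at h
      exact (dvd_contra hd (k := 1) (Dvd.dvd.add (hdvd a ha) (hdvd b hb))
        (hdvd i hi) (by omega) (by omega) (by omega)).elim
    -- all ≥ 1
    · obtain ⟨a', rfl⟩ : ∃ a', a = a' + 1 := ⟨a - 1, by omega⟩
      obtain ⟨b', rfl⟩ : ∃ b', b = b' + 1 := ⟨b - 1, by omega⟩
      obtain ⟨i', rfl⟩ : ∃ i', i = i' + 1 := ⟨i - 1, by omega⟩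
      obtain ⟨j', rfl⟩ : ∃ j', j = j' + 1 := ⟨j - 1, by omega⟩
      simp only [pow_succ] at h
      have h' : d ^ a' + d ^ b' = d ^ i' + d ^ j' :=
        cancel_d hd (by rw [add_mul, add_mul]; omega)
      rcases ih a' b' i' j' (by omega) h' with ⟨h1, h2⟩ | ⟨h1, h2⟩
      · left; omega
      · right; omega

/-- `d^a = d^b + d^i + d^j` is impossible. -/
private lemma auxN2 (hd : 5 ≤ d) :
    ∀ s a b i j : ℕ, a + b + i + j ≤ s → d ^ a = d ^ b + d ^ i + d ^ j → False := by
  intro s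
  induction s with
  | zero =>
    intro a b i j hs h
    have ha : a = 0 := by omega
    have hb : b = 0 := by omega
    have hi : i = 0 := by omega
    have hj : j = 0 := by omega
    subst ha hb hi hj
    simp only [pow_zero] at h
    omega
  | succ s ih =>
    intro a b i j hs h
    have hdvd : ∀ x : ℕ, 1 ≤ x → d ∣ d ^ x := fun x hx => dvd_pow_self d (by omega)
    have hb1 : 1 ≤ d ^ b := Nat.one_le_pow _ _ (by omega)
    have hi1 : 1 ≤ d ^ i := Nat.one_le_pow _ _ (by omega)
    have hj1 : 1 ≤ d ^ j := Nat.one_le_pow _ _ (by omega)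
    rcases Nat.eq_zero_or_pos a with ha | ha
    · subst ha; simp only [pow_zero] at h; omega
    rcases Nat.eq_zero_or_pos b with hb | hb <;>
      rcases Nat.eq_zero_or_pos i with hi | hi <;>
      rcases Nat.eq_zero_or_pos j with hj | hj
    · subst hb hi hj
      simp only [pow_zero] at h
      exact dvd_contra hd (k := 3) (hdvd a ha) (dvd_zero d) (by omega) (by omega) (by omega)
    · subst hb hi
      simp only [pow_zero] at h
      exact dvd_contra hd (k := 2) (hdvd a ha) (hdvd j hj) (by omega) (by omega) (by omega)
    · subst hb hj
      simp only [pow_zero] at h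
      exact dvd_contra hd (k := 2) (hdvd a ha) (hdvd i hi) (by omega) (by omega) (by omega)
    · subst hb
      simp only [pow_zero] at h
      exact dvd_contra hd (k := 1) (hdvd a ha) (Dvd.dvd.add (hdvd i hi) (hdvd j hj))
        (by omega) (by omega) (by omega)
    · subst hi hj
      simp only [pow_zero] at h
      exact dvd_contra hd (k := 2) (hdvd a ha) (hdvd b hb) (by omega) (by omega) (by omega)
    · subst hi
      simp only [pow_zero] at h
      exact dvd_contra hd (k := 1) (hdvd a ha) (Dvd.dvd.add (hdvd b hb) (hdvd j hj))
        (by omega) (by omega) (by omega)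
    · subst hj
      simp only [pow_zero] at h
      exact dvd_contra hd (k := 1) (hdvd a ha) (Dvd.dvd.add (hdvd b hb) (hdvd i hi))
        (by omega) (by omega) (by omega)
    · obtain ⟨a', rfl⟩ : ∃ a', a = a' + 1 := ⟨a - 1, by omega⟩
      obtain ⟨b', rfl⟩ : ∃ b', b = b' + 1 := ⟨b - 1, by omega⟩
      obtain ⟨i', rfl⟩ : ∃ i', i = i' + 1 := ⟨i - 1, by omega⟩
      obtain ⟨j', rfl⟩ : ∃ j', j = j' + 1 := ⟨j - 1, by omega⟩
      simp only [pow_succ] at h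
      have h' : d ^ a' = d ^ b' + d ^ i' + d ^ j' :=
        cancel_d hd (by rw [add_mul, add_mul]; omega)
      exact ih a' b' i' j' (by omega) h'
end intlemmas

section signed
variable {d : ℕ}

private lemma lemZcore (hd : 5 ≤ d) (a b i j : ℕ) (e2 e3 e4 : ℤ)
    (h2 : e2 = 1 ∨ e2 = -1) (h3 : e3 = 1 ∨ e3 = -1) (h4 : e4 = 1 ∨ e4 = -1)
    (heq : (d : ℤ) ^ a + e2 * d ^ b = e3 * d ^ i + e4 * d ^ j)
    (hne : (d : ℤ) ^ a + e2 * d ^ b ≠ 0) :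
    ((d : ℤ) ^ a = e3 * d ^ i ∧ e2 * d ^ b = e4 * d ^ j) ∨
      ((d : ℤ) ^ a = e4 * d ^ j ∧ e2 * d ^ b = e3 * d ^ i) := by
  have hp : ∀ x : ℕ, (0 : ℤ) < (d : ℤ) ^ x := fun x => by positivity
  rcases h2 with rfl | rfl <;> rcases h3 with rfl | rfl <;> rcases h4 with rfl | rfl
  · -- (+,+,+)
    have hz : ((d ^ a + d ^ b : ℕ) : ℤ) = ((d ^ i + d ^ j : ℕ) : ℤ) := by push_cast; linarith
    rcases auxN1 hd (a + b + i + j) a b i j le_rfl (Nat.cast_inj.mp hz) with ⟨rfl, rfl⟩ | ⟨rfl, rfl⟩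
    · left; constructor <;> ring
    · right; constructor <;> ring
  · -- (+,+,-)
    have hz : ((d ^ a + d ^ b + d ^ j : ℕ) : ℤ) = ((d ^ i : ℕ) : ℤ) := by push_cast; linarith
    exact (auxN2 hd (i + a + b + j) i a b j (by omega) (Nat.cast_inj.mp hz).symm).elim
  · -- (+,-,+)
    have hz : ((d ^ a + d ^ b + d ^ i : ℕ) : ℤ) = ((d ^ j : ℕ) : ℤ) := by push_cast; linarith
    exact (auxN2 hd (j + a + b + i) j a b i (by omega) (Nat.cast_inj.mp hz).symm).elim
  · -- (+,-,-)
    have := hp a; have := hp b; have := hp i; have := hp j; exact absurd heq (by linarith)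
  · -- (-,+,+)
    have hz : ((d ^ a : ℕ) : ℤ) = ((d ^ b + d ^ i + d ^ j : ℕ) : ℤ) := by push_cast; linarith
    exact (auxN2 hd (a + b + i + j) a b i j le_rfl (Nat.cast_inj.mp hz)).elim
  · -- (-,+,-)
    have hz : ((d ^ a + d ^ j : ℕ) : ℤ) = ((d ^ i + d ^ b : ℕ) : ℤ) := by push_cast; linarith
    rcases auxN1 hd (a + j + i + b) a j i b le_rfl (Nat.cast_inj.mp hz) with ⟨rfl, rfl⟩ | ⟨h5, h6⟩
    · left; constructor <;> ring
    · subst h5; subst h6; exact absurd (by linarith) hne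
  · -- (-,-,+)
    have hz : ((d ^ a + d ^ i : ℕ) : ℤ) = ((d ^ j + d ^ b : ℕ) : ℤ) := by push_cast; linarith
    rcases auxN1 hd (a + i + j + b) a i j b le_rfl (Nat.cast_inj.mp hz) with ⟨rfl, rfl⟩ | ⟨h5, h6⟩
    · right; constructor <;> ring
    · subst h5; subst h6; exact absurd (by linarith) hne
  · -- (-,-,-)
    have hz : ((d ^ a + d ^ i + d ^ j : ℕ) : ℤ) = ((d ^ b : ℕ) : ℤ) := by push_cast; linarith
    exact (auxN2 hd (b + a + i + j) b a i j (by omega) (Nat.cast_inj.mp hz).symm).elim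

private lemma lemZ (hd : 5 ≤ d) (a b i j : ℕ) (e1 e2 e3 e4 : ℤ)
    (h1 : e1 = 1 ∨ e1 = -1) (h2 : e2 = 1 ∨ e2 = -1) (h3 : e3 = 1 ∨ e3 = -1)
    (h4 : e4 = 1 ∨ e4 = -1)
    (heq : e1 * (d : ℤ) ^ a + e2 * d ^ b = e3 * d ^ i + e4 * d ^ j)
    (hne : e1 * (d : ℤ) ^ a + e2 * d ^ b ≠ 0) :
    (e1 * (d : ℤ) ^ a = e3 * d ^ i ∧ e2 * d ^ b = e4 * d ^ j) ∨
      (e1 * (d : ℤ) ^ a = e4 * d ^ j ∧ e2 * d ^ b = e3 * d ^ i) := by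
  rcases h1 with rfl | rfl
  · simpa using lemZcore hd a b i j e2 e3 e4 h2 h3 h4 (by linarith) (by simpa using hne)
  · have key := lemZcore hd a b i j (-e2) (-e3) (-e4) (by omega) (by omega) (by omega)
      (by linarith) (by intro hcon; exact hne (by linarith))
    rcases key with ⟨k1, k2⟩ | ⟨k1, k2⟩
    · left; constructor <;> linarith
    · right; constructor <;> linarith
end signed

structure MyCtx (d m n : ℕ) (Ω : Set (ZMod n)) : Prop where
  hd : 5 ≤ d
  hm : 1 ≤ m
  hn : d ^ m ≤ n
  hsub : ∀ x ∈ Ω, ∃ j < m, ∃ e : ℤ, (e = 1 ∨ e = -1) ∧ x = ((e * d ^ j : ℤ) : ZMod n)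
  hinv : ∀ x ∈ Ω, -x ∈ Ω

namespace MyCtx
variable {d m n : ℕ} {Ω : Set (ZMod n)} (C : MyCtx d m n Ω)
include C

lemma big : 5 * d ^ (m - 1) ≤ n := by
  have hm := C.hm
  have h1 : d ^ (m - 1) * d = d ^ m := by
    rw [← pow_succ]
    congr 1
    omega
  have h2 : 5 * d ^ (m - 1) ≤ d ^ (m - 1) * d := by
    rw [mul_comm 5]
    exact Nat.mul_le_mul_left _ C.hd
  have := C.hn
  omega

lemma bigZ : 5 * (d : ℤ) ^ (m - 1) ≤ (n : ℤ) := by exact_mod_cast C.big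

lemma powle {j : ℕ} (hj : j < m) : (d : ℤ) ^ j ≤ (d : ℤ) ^ (m - 1) := by
  have : (d : ℕ) ^ j ≤ d ^ (m - 1) := Nat.pow_le_pow_right (by have := C.hd; omega) (by omega)
  exact_mod_cast this

lemma powpos (j : ℕ) : (0 : ℤ) < (d : ℤ) ^ j := by
  have := C.hd
  positivity

lemma n5 : 5 ≤ n := by
  have := C.big
  have := C.powpos (m - 1)
  have : (1 : ℤ) ≤ (d : ℤ) ^ (m - 1) := this
  have : (1 : ℕ) ≤ d ^ (m - 1) := by exact_mod_cast this
  omega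

omit C in
lemma small_eq_zero {x : ℤ} (hx : |x| < n) (h : (x : ZMod n) = 0) : x = 0 :=
  Int.eq_zero_of_abs_lt_dvd ((ZMod.intCast_zmod_eq_zero_iff_dvd x n).mp h) hx

/-- bounds for a signed power with exponent `< m` -/
lemma sp_bound {e : ℤ} {j : ℕ} (he : e = 1 ∨ e = -1) (hj : j < m) :
    -(d : ℤ) ^ (m - 1) ≤ e * (d : ℤ) ^ j ∧ e * (d : ℤ) ^ j ≤ (d : ℤ) ^ (m - 1) := by
  have h1 := C.powle hj
  have h2 := C.powpos j
  rcases he with rfl | rfl <;> constructor <;> linarith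

lemma two_ne {ω : ZMod n} (hω : ω ∈ Ω) : ω + ω ≠ 0 := by
  obtain ⟨j, hj, e, he, rfl⟩ := C.hsub ω hω
  intro h
  have h0 : ((e * d ^ j + e * d ^ j : ℤ) : ZMod n) = 0 := by push_cast; push_cast at h; exact h
  have hb := C.sp_bound he hj
  have hbig := C.bigZ
  have hple := C.powle hj
  have hppos := C.powpos j
  have hp2 := C.powpos (m - 1)
  have hz : (e * d ^ j + e * d ^ j : ℤ) = 0 := small_eq_zero (by rw [abs_lt]; constructor <;> nlinarith) h0
  rcases he with rfl | rfl <;> nlinarith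


lemma zero_not_mem : (0 : ZMod n) ∉ Ω := by
  intro h0
  obtain ⟨j, hj, e, he, hrep⟩ := C.hsub 0 h0
  have hb := C.sp_bound he hj
  have hbig := C.bigZ
  have hppos := C.powpos j
  have hp2 := C.powpos (m - 1)
  have hz : (e * d ^ j : ℤ) = 0 :=
    small_eq_zero (by rw [abs_lt]; constructor <;> nlinarith) hrep.symm
  rcases he with rfl | rfl <;> nlinarith

/-- The crucial uniqueness-of-representation lemma in `ZMod n`. -/
lemma master {α γ ω δ : ZMod n} (hα : α ∈ Ω) (hγ : γ ∈ Ω) (hω : ω ∈ Ω) (hδ : δ ∈ Ω)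
    (h : α - γ = ω + δ) (hne : ω + δ ≠ 0) :
    (α = ω ∧ γ = -δ) ∨ (α = δ ∧ γ = -ω) := by
  obtain ⟨ja, hja, ea, hea, hra⟩ := C.hsub α hα
  obtain ⟨jg, hjg, eg, heg, hrg⟩ := C.hsub γ hγ
  obtain ⟨jo, hjo, eo, heo, hro⟩ := C.hsub ω hω
  obtain ⟨jd, hjd, ed, hed, hrd⟩ := C.hsub δ hδ
  have hba := C.sp_bound hea hja
  have hbg := C.sp_bound heg hjg
  have hbo := C.sp_bound heo hjo
  have hbd := C.sp_bound hed hjd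
  have hbig := C.bigZ
  have hppos := C.powpos (m - 1)
  have hE0 : ((ea * d ^ ja - eg * d ^ jg - eo * d ^ jo - ed * d ^ jd : ℤ) : ZMod n) = 0 := by
    rw [hra, hrg, hro, hrd] at h
    push_cast
    push_cast at h
    linear_combination h
  have hEz : (ea * d ^ ja - eg * d ^ jg - eo * d ^ jo - ed * d ^ jd : ℤ) = 0 :=
    small_eq_zero (by rw [abs_lt]; constructor <;> nlinarith) hE0
  have heq2 : ea * (d : ℤ) ^ ja + (-eg) * d ^ jg = eo * d ^ jo + ed * d ^ jd := by linarith
  have hne2 : ea * (d : ℤ) ^ ja + (-eg) * d ^ jg ≠ 0 := by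
    intro h0
    apply hne
    rw [← h, hra, hrg]
    have : (ea * d ^ ja : ℤ) = eg * d ^ jg := by linarith
    rw [this]
    push_cast
    ring
  rcases lemZ C.hd ja jg jo jd ea (-eg) eo ed hea (by omega) heo hed heq2 hne2 with
    ⟨k1, k2⟩ | ⟨k1, k2⟩
  · left
    constructor
    · rw [hra, hro, k1]
    · rw [hrg, hrd]
      have : (eg * d ^ jg : ℤ) = -(ed * d ^ jd) := by linarith
      rw [this]
      push_cast
      ring
  · right
    constructor
    · rw [hra, hrd, k1]
    · rw [hrg, hro]
      have : (eg * d ^ jg : ℤ) = -(eo * d ^ jo) := by linarith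
      rw [this]
      push_cast
      ring

lemma adj_iff {u v : ZMod n} : (cayA (ZMod n) Ω).Adj u v ↔ v - u ∈ Ω := by
  rw [cayA, SimpleGraph.fromRel_adj]
  constructor
  · rintro ⟨hne', h | h⟩
    · exact h
    · have := C.hinv _ h
      rwa [neg_sub] at this
  · intro h
    refine ⟨?_, Or.inl h⟩
    intro he
    rw [he] at h
    simp only [sub_self] at h
    exact C.zero_not_mem h


/-- Characterisation of `u + ω + ω` via the graph structure. -/
lemma uniq {u ω : ZMod n} (hω : ω ∈ Ω) (w : ZMod n) :
    ((cayA (ZMod n) Ω).Adj (u + ω) w ∧ w ≠ u ∧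
      ∃! y, (cayA (ZMod n) Ω).Adj u y ∧ (cayA (ZMod n) Ω).Adj w y) ↔ w = u + ω + ω := by
  constructor
  · rintro ⟨hadj, hwu, hy⟩
    have hδ : w - (u + ω) ∈ Ω := C.adj_iff.mp hadj
    set δ := w - (u + ω) with hδdef
    have hw : w = u + ω + δ := by rw [hδdef]; ring
    by_cases hcase : δ = ω
    · rw [hw, hcase]
    · exfalso
      have hy1 : (cayA (ZMod n) Ω).Adj u (u + ω) ∧ (cayA (ZMod n) Ω).Adj w (u + ω) := by
        constructor
        · exact C.adj_iff.mpr (by simpa using hω)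
        · refine C.adj_iff.mpr ?_
          have : u + ω - w = -δ := by rw [hw]; ring
          rw [this]
          exact C.hinv _ hδ
      have hy2 : (cayA (ZMod n) Ω).Adj u (u + δ) ∧ (cayA (ZMod n) Ω).Adj w (u + δ) := by
        constructor
        · exact C.adj_iff.mpr (by simpa using hδ)
        · refine C.adj_iff.mpr ?_
          have : u + δ - w = -ω := by rw [hw]; ring
          rw [this]
          exact C.hinv _ hω
      obtain ⟨y0, _, huniq⟩ := hy
      have e1 := huniq _ hy1
      have e2 := huniq _ hy2
      exact hcase (add_left_cancel (e2.trans e1.symm))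
  · rintro rfl
    refine ⟨?_, ?_, ?_⟩
    · refine C.adj_iff.mpr ?_
      have : u + ω + ω - (u + ω) = ω := by ring
      rw [this]; exact hω
    · intro h
      exact C.two_ne hω (by linear_combination h - (by ring : u + (ω + ω) = u + ω + ω))
    · refine ⟨u + ω, ⟨C.adj_iff.mpr (by simpa using hω), C.adj_iff.mpr ?_⟩, ?_⟩
      · have : u + ω - (u + ω + ω) = -ω := by ring
        rw [this]; exact C.hinv _ hω
      · rintro y ⟨hyu, hyw⟩
        have hα : y - u ∈ Ω := C.adj_iff.mp hyu
        have hγ : y - (u + ω + ω) ∈ Ω := C.adj_iff.mp hyw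
        have hsum : (y - u) - (y - (u + ω + ω)) = ω + ω := by ring
        rcases C.master hα hγ hω hω hsum (C.two_ne hω) with ⟨k1, _⟩ | ⟨k1, _⟩ <;>
          · have : y = u + ω := by linear_combination k1
            exact this

omit C in
lemma mem_graphAut_iff {V : Type*} (Γ : SimpleGraph V) (f : Equiv.Perm V) :
    f ∈ graphAut Γ ↔ ∀ a b, Γ.Adj (f a) (f b) ↔ Γ.Adj a b := Iff.rfl

/-- Iteration along a line. -/
lemma iter {f : Equiv.Perm (ZMod n)} (hf : f ∈ graphAut (cayA (ZMod n) Ω))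
    (h0 : f 0 = 0) {ω : ZMod n} (hω : ω ∈ Ω) :
    ∀ k : ℕ, f ((k : ZMod n) * ω) = (k : ZMod n) * (f ω) := by
  have hf' := (mem_graphAut_iff _ f).mp hf
  have hω' : f ω ∈ Ω := by
    have h1 : (cayA (ZMod n) Ω).Adj 0 ω := C.adj_iff.mpr (by simpa using hω)
    have h2 : (cayA (ZMod n) Ω).Adj (f 0) (f ω) := (hf' 0 ω).mpr h1
    rw [h0] at h2
    simpa using C.adj_iff.mp h2
  have key : ∀ k : ℕ, f ((k : ZMod n) * ω) = (k : ZMod n) * (f ω) ∧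
      f (((k + 1 : ℕ) : ZMod n) * ω) = ((k + 1 : ℕ) : ZMod n) * (f ω) := by
    intro k
    induction k with
    | zero => constructor <;> simp [h0]
    | succ k ihk =>
      obtain ⟨hk, hk1⟩ := ihk
      refine ⟨hk1, ?_⟩
      -- the triple (kω, (k+1)ω, (k+2)ω)
      have base : ((k + 2 : ℕ) : ZMod n) * ω = (k : ZMod n) * ω + ω + ω := by push_cast; ring
      have tri := (C.uniq hω (u := (k : ZMod n) * ω) (((k + 2 : ℕ) : ZMod n) * ω)).mpr base
      obtain ⟨tadj, tne, y0, hy0, hy0u⟩ := tri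
      -- transfer through f
      have step1 : ((k : ZMod n) * ω + ω) = ((k + 1 : ℕ) : ZMod n) * ω := by push_cast; ring
      have tadj' : (cayA (ZMod n) Ω).Adj ((k : ZMod n) * (f ω) + f ω)
          (f (((k + 2 : ℕ) : ZMod n) * ω)) := by
        rw [step1] at tadj
        have := (hf' (((k + 1 : ℕ) : ZMod n) * ω) (((k + 2 : ℕ) : ZMod n) * ω)).mpr tadj
        rw [hk1] at this
        have e : ((k + 1 : ℕ) : ZMod n) * f ω = (k : ZMod n) * f ω + f ω := by push_cast; ring
        rwa [e] at this
      have tne' : f (((k + 2 : ℕ) : ZMod n) * ω) ≠ (k : ZMod n) * (f ω) := by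
        intro h
        apply tne
        have := f.injective (h.trans hk.symm)
        exact this
      have tuniq' : ∃! y, (cayA (ZMod n) Ω).Adj ((k : ZMod n) * (f ω)) y ∧
          (cayA (ZMod n) Ω).Adj (f (((k + 2 : ℕ) : ZMod n) * ω)) y := by
        refine ⟨f y0, ⟨?_, ?_⟩, ?_⟩
        · rw [← hk]; exact (hf' _ _).mpr hy0.1
        · exact (hf' _ _).mpr hy0.2
        · rintro y' ⟨h1, h2⟩
          have h1' : (cayA (ZMod n) Ω).Adj (f ((k : ZMod n) * ω)) (f (f.symm y')) := by
            rw [hk, f.apply_symm_apply]; exact h1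
          have h2' : (cayA (ZMod n) Ω).Adj (f (((k + 2 : ℕ) : ZMod n) * ω)) (f (f.symm y')) := by
            rw [f.apply_symm_apply]; exact h2
          have := hy0u (f.symm y') ⟨(hf' _ _).mp h1', (hf' _ _).mp h2'⟩
          rw [← this, f.apply_symm_apply]
      have final := (C.uniq hω' (u := (k : ZMod n) * (f ω))
        (f (((k + 2 : ℕ) : ZMod n) * ω))).mp ⟨tadj', tne', tuniq'⟩
      rw [final]
      push_cast
      ring
  intro k
  exact (key k).1

end MyCtx

theorem stmt15 (c d m : ℕ) (hc : 1 ≤ c) (hcd : c < d) (hd : 5 ≤ d) (hm : 1 ≤ m)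
    (Ω : Set (ZMod (c * d ^ m)))
    (hsub : Ω ⊆ {x | ∃ j < m, x = (d : ZMod (c * d ^ m)) ^ j ∨
      x = -(d : ZMod (c * d ^ m)) ^ j})
    (hinv : ∀ x ∈ Ω, -x ∈ Ω) (h1 : (1 : ZMod (c * d ^ m)) ∈ Ω)
    (hm1 : (-1 : ZMod (c * d ^ m)) ∈ Ω) :
    Nonempty ((graphAut (cayA (ZMod (c * d ^ m)) Ω)) ≃*
      DihedralGroup (c * d ^ m)) := by
  have hdpos : 0 < d := by omega
  have hnpos : 0 < c * d ^ m := Nat.mul_pos (by omega) (pow_pos hdpos m)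
  haveI : NeZero (c * d ^ m) := ⟨by omega⟩
  -- build the context
  have C : MyCtx d m (c * d ^ m) Ω := by
    refine ⟨hd, hm, Nat.le_mul_of_pos_left _ (by omega), ?_, hinv⟩
    intro x hx
    obtain ⟨j, hj, hx'⟩ := hsub hx
    rcases hx' with h | h
    · exact ⟨j, hj, 1, Or.inl rfl, by rw [h]; push_cast; ring⟩
    · exact ⟨j, hj, -1, Or.inr rfl, by rw [h]; push_cast; ring⟩
  have hn5 := C.n5
  -- the stabilizer of 0 consists of ±id
  have stab : ∀ f : Equiv.Perm (ZMod (c * d ^ m)), f ∈ graphAut (cayA (ZMod (c * d ^ m)) Ω) →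
      f 0 = 0 → (∀ x, f x = x) ∨ (∀ x, f x = -x) := by
    intro f hf h0
    have h1m : (1 : ZMod (c * d ^ m)) ∈ Ω := h1
    have hiter := C.iter hf h0 h1m
    have hfx : ∀ x : ZMod (c * d ^ m), f x = x * f 1 := by
      intro x
      have := hiter x.val
      rw [mul_one, ZMod.natCast_rightInverse x] at this
      exact this
    have hu : f 1 ∈ Ω := by
      have ha : (cayA (ZMod (c * d ^ m)) Ω).Adj 0 1 := C.adj_iff.mpr (by simpa using h1)
      have hb := ((MyCtx.mem_graphAut_iff _ f).mp hf 0 1).mpr ha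
      rw [h0] at hb
      simpa using C.adj_iff.mp hb
    obtain ⟨j, hj, e, he, hrep⟩ := C.hsub _ hu
    have hj0 : j = 0 := by
      by_contra hj0
      have hjpos : 1 ≤ j := by omega
      set x₀ : ZMod (c * d ^ m) := ((c * d ^ (m - j) : ℕ) : ZMod (c * d ^ m)) with hx₀
      have hx₀ne : x₀ ≠ 0 := by
        rw [hx₀, Ne, ZMod.natCast_eq_zero_iff]
        intro hdvd
        have hplt : d ^ (m - j) < d ^ m := Nat.pow_lt_pow_right (by omega) (by omega)
        have hlt : c * d ^ (m - j) < c * d ^ m := by nlinarith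
        have := Nat.le_of_dvd (Nat.mul_pos (by omega) (pow_pos hdpos _)) hdvd
        omega
      have hmul : x₀ * f 1 = 0 := by
        rw [hx₀, hrep]
        have hcast : ((c * d ^ m : ℕ) : ZMod (c * d ^ m)) = 0 := ZMod.natCast_self _
        have : ((c * d ^ (m - j) : ℕ) : ZMod (c * d ^ m)) * ((e * d ^ j : ℤ) : ZMod (c * d ^ m))
            = (e : ZMod (c * d ^ m)) * ((c * d ^ m : ℕ) : ZMod (c * d ^ m)) := by
          push_cast
          linear_combination ((c : ZMod (c * d ^ m)) * (e : ZMod (c * d ^ m))) *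
            pow_sub_mul_pow (d : ZMod (c * d ^ m)) (le_of_lt hj)
        rw [this, hcast, mul_zero]
      have : f x₀ = f 0 := by rw [hfx x₀, hmul, h0]
      exact hx₀ne (f.injective this)
    subst hj0
    rcases he with rfl | rfl
    · left; intro x; rw [hfx x, hrep]; push_cast; ring
    · right; intro x; rw [hfx x, hrep]; push_cast; ring
  -- translations and reflections are automorphisms
  have tR : ∀ a : ZMod (c * d ^ m), Equiv.subRight a ∈ graphAut (cayA (ZMod (c * d ^ m)) Ω) := by
    intro a x y
    simp only [Equiv.subRight_apply]
    rw [C.adj_iff, C.adj_iff]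
    have : y - a - (x - a) = y - x := by ring
    rw [this]
  have tS : ∀ a : ZMod (c * d ^ m), Equiv.subLeft a ∈ graphAut (cayA (ZMod (c * d ^ m)) Ω) := by
    intro a x y
    simp only [Equiv.subLeft_apply]
    rw [C.adj_iff, C.adj_iff]
    have : a - y - (a - x) = -(y - x) := by ring
    rw [this]
    constructor
    · intro h
      have := C.hinv _ h
      rwa [neg_neg] at this
    · intro h
      exact C.hinv _ h
  -- the homomorphism from the dihedral group
  let φ : DihedralGroup (c * d ^ m) →* graphAut (cayA (ZMod (c * d ^ m)) Ω) :=
    { toFun := fun g => match g with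
        | DihedralGroup.r i => ⟨Equiv.subRight i, tR i⟩
        | DihedralGroup.sr i => ⟨Equiv.subLeft i, tS i⟩
      map_one' := by
        rw [DihedralGroup.one_def]
        exact Subtype.ext (Equiv.ext fun x => by simp)
      map_mul' := by
        rintro (i | i) (j | j)
        · rw [DihedralGroup.r_mul_r]
          exact Subtype.ext (Equiv.ext fun x => by
            simp only [Subgroup.coe_mul, Equiv.Perm.mul_apply, Equiv.subRight_apply]
            ring)
        · rw [DihedralGroup.r_mul_sr]
          exact Subtype.ext (Equiv.ext fun x => by
            simp only [Subgroup.coe_mul, Equiv.Perm.mul_apply, Equiv.subRight_apply,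
              Equiv.subLeft_apply]
            ring)
        · rw [DihedralGroup.sr_mul_r]
          exact Subtype.ext (Equiv.ext fun x => by
            simp only [Subgroup.coe_mul, Equiv.Perm.mul_apply, Equiv.subRight_apply,
              Equiv.subLeft_apply]
            ring)
        · rw [DihedralGroup.sr_mul_sr]
          exact Subtype.ext (Equiv.ext fun x => by
            simp only [Subgroup.coe_mul, Equiv.Perm.mul_apply, Equiv.subRight_apply,
              Equiv.subLeft_apply]
            ring) }
  have htwo : (2 : ZMod (c * d ^ m)) ≠ 0 := by
    have : ((2 : ℕ) : ZMod (c * d ^ m)) ≠ 0 := by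
      rw [Ne, ZMod.natCast_eq_zero_iff]
      intro hdvd
      have := Nat.le_of_dvd (by omega) hdvd
      omega
    simpa using this
  have hinj : Function.Injective φ := by
    rintro (i | i) (j | j) hgh
    · have := congrArg (fun F : graphAut (cayA (ZMod (c * d ^ m)) Ω) => (F : Equiv.Perm (ZMod (c * d ^ m))) 0) hgh
      simp only [φ, MonoidHom.coe_mk, OneHom.coe_mk, Equiv.subRight_apply] at this
      congr 1
      linear_combination -this
    · exfalso
      have h0 := congrArg (fun F : graphAut (cayA (ZMod (c * d ^ m)) Ω) => (F : Equiv.Perm (ZMod (c * d ^ m))) 0) hgh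
      have hone := congrArg (fun F : graphAut (cayA (ZMod (c * d ^ m)) Ω) => (F : Equiv.Perm (ZMod (c * d ^ m))) 1) hgh
      simp only [φ, MonoidHom.coe_mk, OneHom.coe_mk, Equiv.subRight_apply,
        Equiv.subLeft_apply] at h0 hone
      exact htwo (by linear_combination hone - h0)
    · exfalso
      have h0 := congrArg (fun F : graphAut (cayA (ZMod (c * d ^ m)) Ω) => (F : Equiv.Perm (ZMod (c * d ^ m))) 0) hgh
      have hone := congrArg (fun F : graphAut (cayA (ZMod (c * d ^ m)) Ω) => (F : Equiv.Perm (ZMod (c * d ^ m))) 1) hgh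
      simp only [φ, MonoidHom.coe_mk, OneHom.coe_mk, Equiv.subRight_apply,
        Equiv.subLeft_apply] at h0 hone
      exact htwo (by linear_combination h0 - hone)
    · have := congrArg (fun F : graphAut (cayA (ZMod (c * d ^ m)) Ω) => (F : Equiv.Perm (ZMod (c * d ^ m))) 0) hgh
      simp only [φ, MonoidHom.coe_mk, OneHom.coe_mk, Equiv.subLeft_apply] at this
      congr 1
      linear_combination this
  have hsurj : Function.Surjective φ := by
    rintro ⟨f, hf⟩
    have hg : Equiv.subRight (f 0) * f ∈ graphAut (cayA (ZMod (c * d ^ m)) Ω) :=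
      mul_mem (tR (f 0)) hf
    have hg0 : (Equiv.subRight (f 0) * f) 0 = 0 := by
      simp [Equiv.Perm.mul_apply]
    rcases stab _ hg hg0 with hid | hneg
    · refine ⟨DihedralGroup.r (-(f 0)), Subtype.ext (Equiv.ext fun x => ?_)⟩
      have := hid x
      simp only [Equiv.Perm.mul_apply, Equiv.subRight_apply] at this
      simp only [φ, MonoidHom.coe_mk, OneHom.coe_mk, Equiv.subRight_apply]
      linear_combination -this
    · refine ⟨DihedralGroup.sr (f 0), Subtype.ext (Equiv.ext fun x => ?_)⟩
      have := hneg x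
      simp only [Equiv.Perm.mul_apply, Equiv.subRight_apply] at this
      simp only [φ, MonoidHom.coe_mk, OneHom.coe_mk, Equiv.subLeft_apply]
      linear_combination -this
  exact ⟨(MulEquiv.ofBijective φ ⟨hinj, hsurj⟩).symm⟩
end

section
/- Let k > 3. The automorphism group of the even Möbius ladder M_{2k} = Cay(ℤ_{2k}; {1, 2k-1, k}) is isomorphic to the dihedral group D_{4k} of order 4k. -/
namespace ML

lemma mem_graphAut {V : Type*} {Γ : SimpleGraph V} {f : Equiv.Perm V} :
    f ∈ graphAut Γ ↔ ∀ a b, Γ.Adj (f a) (f b) ↔ Γ.Adj a b := Iff.rfl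

variable {k : ℕ}

def Sk (k : ℕ) : Set (ZMod (2*k)) :=
  {1, ((2 * k - 1 : ℕ) : ZMod (2 * k)), ((k : ℕ) : ZMod (2 * k))}

def Gk (k : ℕ) : SimpleGraph (ZMod (2*k)) := cayA (ZMod (2*k)) (Sk k)

/-- the rung element -/
def K (k : ℕ) : ZMod (2*k) := ((k : ℤ) : ZMod (2*k))

lemma V_eq (hk : 3 < k) {x y : ℤ} (h : (2*(k:ℤ)) ∣ x - y) :
    (x : ZMod (2*k)) = (y : ZMod (2*k)) := by
  rw [ZMod.intCast_eq_intCast_iff, Int.modEq_iff_dvd]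
  push_cast
  exact dvd_sub_comm.mp h

lemma V_ne' (hk : 3 < k) {x y : ℤ} (h0 : x - y ≠ 0) (h1 : -(2*(k:ℤ)) < x - y)
    (h2 : x - y < 2*(k:ℤ)) : (x : ZMod (2*k)) ≠ (y : ZMod (2*k)) := by
  intro he
  rw [ZMod.intCast_eq_intCast_iff, Int.modEq_iff_dvd] at he
  push_cast at he
  rcases he with ⟨c, hc⟩
  rcases lt_trichotomy c 0 with hc0 | hc0 | hc0
  · nlinarith
  · subst hc0; simp at hc; omega
  · nlinarith

lemma one_ne (hk : 3 < k) : (1 : ZMod (2*k)) ≠ 0 := by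
  have := V_ne' hk (x:=1) (y:=0) (by omega) (by omega) (by omega)
  push_cast at this; exact this

lemma negone_ne (hk : 3 < k) : (-1 : ZMod (2*k)) ≠ 0 := by
  have := V_ne' hk (x:=-1) (y:=0) (by omega) (by omega) (by omega)
  push_cast at this; exact this

lemma K_ne (hk : 3 < k) : K k ≠ 0 := by
  have := V_ne' hk (x:=(k:ℤ)) (y:=0) (by omega) (by omega) (by omega)
  rw [K]; intro he; apply this; rw [he]; push_cast; rfl

lemma two_ne (hk : 3 < k) : (2 : ZMod (2*k)) ≠ 0 := by
  have := V_ne' hk (x:=2) (y:=0) (by omega) (by omega) (by omega)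
  push_cast at this; exact this

lemma mem_Sk_iff (hk : 3 < k) (d : ZMod (2*k)) :
    d ∈ Sk k ↔ d = 1 ∨ d = -1 ∨ d = K k := by
  have h1 : ((2 * k - 1 : ℕ) : ZMod (2 * k)) = -1 := by
    have : (1:ℕ) ≤ 2*k := by omega
    rw [Nat.cast_sub this, ZMod.natCast_self, Nat.cast_one, zero_sub]
  have h2 : ((k : ℕ) : ZMod (2*k)) = K k := by
    rw [K]; push_cast; rfl
  rw [Sk, Set.mem_insert_iff, Set.mem_insert_iff, Set.mem_singleton_iff, h1, h2]

lemma negK (hk : 3 < k) : -(K k) = K k := by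
  have h : ((2*(k:ℤ) : ℤ) : ZMod (2*k)) = ((0:ℤ) : ZMod (2*k)) := V_eq hk ⟨1, by ring⟩
  push_cast at h
  rw [K]; push_cast; linear_combination -h

lemma adj_iff (hk : 3 < k) (a b : ZMod (2*k)) :
    (Gk k).Adj a b ↔ a ≠ b ∧ (b - a = 1 ∨ b - a = -1 ∨ b - a = K k) := by
  rw [Gk, cayA, SimpleGraph.fromRel_adj]
  rw [mem_Sk_iff hk, mem_Sk_iff hk]
  constructor
  · rintro ⟨hne, h | h⟩
    · exact ⟨hne, h⟩
    · refine ⟨hne, ?_⟩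
      have hr : b - a = -(a-b) := by ring
      rcases h with h | h | h
      · right; left; rw [hr, h]
      · left; rw [hr, h]; ring
      · right; right; rw [hr, h, negK hk]
  · rintro ⟨hne, h⟩
    exact ⟨hne, Or.inl h⟩

lemma adj_iff' (hk : 3 < k) (a b : ZMod (2*k)) :
    (Gk k).Adj a b ↔ b = a + 1 ∨ b = a - 1 ∨ b = a + K k := by
  rw [adj_iff hk]
  constructor
  · rintro ⟨-, h | h | h⟩
    · left; linear_combination h
    · right; left; linear_combination h
    · right; right; linear_combination h
  · intro h
    have hne : a ≠ b := by
      rcases h with rfl | rfl | rfl <;> intro he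
      · exact one_ne hk (by linear_combination -he)
      · exact negone_ne hk (by linear_combination -he)
      · exact K_ne hk (by linear_combination -he)
    refine ⟨hne, ?_⟩
    rcases h with rfl | rfl | rfl
    · left; ring
    · right; left; ring
    · right; right; ring



namespace ML2
open ML

variable {k : ℕ}

lemma collapse (hk : 3 < k) (α β : ℤ) (hα : α + β * k ≠ 0) (h1 : -(2*(k:ℤ)) < α + β*k)
    (h2 : α + β*k < 2*(k:ℤ)) : (α : ZMod (2*k)) + (β : ZMod (2*k)) * K k ≠ 0 := by
  intro h
  apply V_ne' hk (x := α + β * (k:ℤ)) (y := 0) (by omega) (by omega) (by omega)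
  rw [K] at h
  push_cast at h ⊢
  linear_combination h

lemma twoK (hk : 3 < k) : K k + K k = 0 := by
  have := negK hk; linear_combination -this

def T (k : ℕ) (a b x y : ZMod (2*k)) : Prop :=
  (Gk k).Adj b x ∧ (Gk k).Adj x y ∧ (Gk k).Adj y a ∧ x ≠ a ∧ y ≠ b

def R (k : ℕ) (a b : ZMod (2*k)) : Prop :=
  (Gk k).Adj a b ∧ ∃ x y x' y', T k a b x y ∧ T k a b x' y' ∧ x ≠ x'

lemma T_cycle_unique (hk : 3 < k) (a x y : ZMod (2*k)) (h : T k a (a+1) x y) :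
    x = a + 1 + K k := by
  obtain ⟨hbx, hxy, hya, hxa, hyb⟩ := h
  rw [adj_iff' hk] at hbx hxy hya
  have htK := twoK hk
  rcases hbx with rfl | rfl | rfl
  · exfalso
    rcases hxy with rfl | rfl | rfl
    · rcases hya with h | h | h
      · exact collapse hk 4 0 (by omega) (by omega) (by omega) (by linear_combination -h)
      · exact collapse hk 2 0 (by omega) (by omega) (by omega) (by linear_combination -h)
      · exact collapse hk 3 1 (by omega) (by omega) (by omega) (by linear_combination -h)
    · exact hyb (by ring)
    · rcases hya with h | h | h
      · exact collapse hk 3 1 (by omega) (by omega) (by omega) (by linear_combination -h)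
      · exact collapse hk 1 1 (by omega) (by omega) (by omega) (by linear_combination -h)
      · exact collapse hk 2 0 (by omega) (by omega) (by omega)
          (by linear_combination -h - htK)
  · exact ((hxa (show a + 1 - 1 = a by ring)).elim)
  · rfl

lemma not_R_cycle (hk : 3 < k) (a : ZMod (2*k)) : ¬ R k a (a+1) := by
  rintro ⟨-, x, y, x', y', h1, h2, hxx⟩
  exact hxx ((T_cycle_unique hk a x y h1).trans (T_cycle_unique hk a x' y' h2).symm)

lemma R_rung (hk : 3 < k) (a : ZMod (2*k)) : R k a (a + K k) := by
  have htK := twoK hk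
  refine ⟨(adj_iff' hk _ _).mpr (Or.inr (Or.inr rfl)),
    a + K k + 1, a + 1, a + K k - 1, a - 1, ⟨?_, ?_, ?_, ?_, ?_⟩, ⟨?_, ?_, ?_, ?_, ?_⟩, ?_⟩
  · exact (adj_iff' hk _ _).mpr (Or.inl rfl)
  · exact (adj_iff' hk _ _).mpr (Or.inr (Or.inr (by linear_combination -htK)))
  · exact (adj_iff' hk _ _).mpr (Or.inr (Or.inl (by ring)))
  · intro h
    exact collapse hk 1 1 (by omega) (by omega) (by omega) (by linear_combination h)
  · intro h
    exact collapse hk 1 (-1) (by omega) (by omega) (by omega) (by linear_combination h)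
  · exact (adj_iff' hk _ _).mpr (Or.inr (Or.inl rfl))
  · exact (adj_iff' hk _ _).mpr (Or.inr (Or.inr (by linear_combination -htK)))
  · exact (adj_iff' hk _ _).mpr (Or.inl (by ring))
  · intro h
    exact collapse hk (-1) 1 (by omega) (by omega) (by omega) (by linear_combination h)
  · intro h
    exact collapse hk (-1) (-1) (by omega) (by omega) (by omega) (by linear_combination h)
  · intro h
    exact collapse hk 2 0 (by omega) (by omega) (by omega) (by linear_combination h)

lemma T_map {f : Equiv.Perm (ZMod (2*k))} (hf : f ∈ graphAut (Gk k)) {a b x y : ZMod (2*k)}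
    (h : T k a b x y) : T k (f a) (f b) (f x) (f y) := by
  obtain ⟨h1, h2, h3, h4, h5⟩ := h
  exact ⟨(hf _ _).mpr h1, (hf _ _).mpr h2, (hf _ _).mpr h3,
    fun he => h4 (f.injective he), fun he => h5 (f.injective he)⟩

lemma R_map {f : Equiv.Perm (ZMod (2*k))} (hf : f ∈ graphAut (Gk k)) {a b : ZMod (2*k)}
    (h : R k a b) : R k (f a) (f b) := by
  obtain ⟨hadj, x, y, x', y', h1, h2, hxx⟩ := h
  exact ⟨(hf _ _).mpr hadj, f x, f y, f x', f y', T_map hf h1, T_map hf h2,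
    fun he => hxx (f.injective he)⟩

lemma R_iff {f : Equiv.Perm (ZMod (2*k))} (hf : f ∈ graphAut (Gk k)) {a b : ZMod (2*k)} :
    R k (f a) (f b) ↔ R k a b := by
  constructor
  · intro h
    have := R_map (inv_mem hf) h
    simpa using this
  · exact R_map hf

lemma rot_mem (hk : 3 < k) (i : ZMod (2*k)) : Equiv.subRight i ∈ graphAut (Gk k) := by
  intro a b
  simp only [Equiv.subRight_apply]
  rw [adj_iff hk, adj_iff hk]
  constructor
  · rintro ⟨h1, h2⟩
    refine ⟨fun he => h1 (by rw [he]), ?_⟩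
    have : b - a = (b - i) - (a - i) := by ring
    rw [this]; exact h2
  · rintro ⟨h1, h2⟩
    refine ⟨fun he => h1 (by linear_combination he), ?_⟩
    have : (b - i) - (a - i) = b - a := by ring
    rw [this]; exact h2

lemma refl_mem (hk : 3 < k) (i : ZMod (2*k)) : Equiv.subLeft i ∈ graphAut (Gk k) := by
  intro a b
  simp only [Equiv.subLeft_apply]
  rw [adj_iff hk, adj_iff hk]
  have hnK := negK hk
  constructor
  · rintro ⟨h1, h2⟩
    refine ⟨fun he => h1 (by rw [he]), ?_⟩
    rcases h2 with h | h | h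
    · right; left; linear_combination -h
    · left; linear_combination -h
    · right; right; linear_combination -h + hnK
  · rintro ⟨h1, h2⟩
    refine ⟨fun he => h1 (by linear_combination -he), ?_⟩
    rcases h2 with h | h | h
    · right; left; linear_combination -h
    · left; linear_combination -h
    · right; right; linear_combination -h + hnK

lemma step (hk : 3 < k) {f : Equiv.Perm (ZMod (2*k))} (hf : f ∈ graphAut (Gk k))
    {a : ZMod (2*k)} (h1 : f a = a) (h2 : f (a+1) = a+1) : f (a+1+1) = a+1+1 := by
  have hadj : (Gk k).Adj (a+1) (a+1+1) := (adj_iff' hk _ _).mpr (Or.inl rfl)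
  have h3 : (Gk k).Adj (a+1) (f (a+1+1)) := by
    have := (hf (a+1) (a+1+1)).mpr hadj
    rwa [h2] at this
  rcases (adj_iff' hk _ _).mp h3 with he | he | he
  · exact he
  · exfalso
    have heq : a+1+1 = a := f.injective (by rw [he, h1]; ring)
    exact collapse hk 2 0 (by omega) (by omega) (by omega) (by linear_combination heq)
  · exfalso
    have hR : R k (f (a+1)) (f (a+1+1)) := by
      rw [h2, he]; exact R_rung hk (a+1)
    exact not_R_cycle hk (a+1) ((R_iff hf).mp hR)

lemma f_id (hk : 3 < k) {f : Equiv.Perm (ZMod (2*k))} (hf : f ∈ graphAut (Gk k))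
    (h0 : f 0 = 0) (h1 : f 1 = 1) : ∀ x, f x = x := by
  haveI : NeZero (2*k) := ⟨by omega⟩
  have key : ∀ m : ℕ, f (m : ZMod (2*k)) = m ∧ f ((m : ZMod (2*k))+1) = (m : ZMod (2*k))+1 := by
    intro m
    induction m with
    | zero => refine ⟨by simpa using h0, by simpa using h1⟩
    | succ n ih =>
      have hs := step hk hf ih.1 ih.2
      refine ⟨by push_cast; exact ih.2, by push_cast; exact hs⟩
  intro x
  obtain ⟨m, rfl⟩ := ZMod.natCast_zmod_surjective x
  exact (key m).1

lemma classify (hk : 3 < k) {f : Equiv.Perm (ZMod (2*k))} (hf : f ∈ graphAut (Gk k)) :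
    (∀ x, f x = x + f 0) ∨ (∀ x, f x = f 0 - x) := by
  set c := f 0 with hc
  set g : Equiv.Perm (ZMod (2*k)) := Equiv.subRight c * f with hgdef
  have hg : g ∈ graphAut (Gk k) := mul_mem (rot_mem hk c) hf
  have hgx : ∀ x, g x = f x - c := fun x => rfl
  have hg0 : g 0 = 0 := by rw [hgx 0, ← hc, sub_self]
  have hadj01 : (Gk k).Adj (0 : ZMod (2*k)) 1 := (adj_iff' hk _ _).mpr (Or.inl (zero_add 1).symm)
  have h3 : (Gk k).Adj 0 (g 1) := by
    have := (hg 0 1).mpr hadj01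
    rwa [hg0] at this
  rcases (adj_iff' hk _ _).mp h3 with he | he | he
  · -- g 1 = 0 + 1
    left
    intro x
    have := f_id hk hg hg0 (by rw [he, zero_add]) x
    rw [hgx x] at this
    linear_combination this
  · -- g 1 = 0 - 1
    right
    intro x
    set h : Equiv.Perm (ZMod (2*k)) := Equiv.subLeft 0 * g with hhdef
    have hh : h ∈ graphAut (Gk k) := mul_mem (refl_mem hk 0) hg
    have hhx : ∀ x, h x = 0 - g x := fun x => rfl
    have hh0 : h 0 = 0 := by rw [hhx 0, hg0, sub_zero]
    have hh1 : h 1 = 1 := by rw [hhx 1, he]; ring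
    have := f_id hk hh hh0 hh1 x
    rw [hhx x, hgx x] at this
    linear_combination -this
  · -- g 1 = 0 + K : impossible
    exfalso
    have hR : R k (g 0) (g 1) := by
      rw [hg0, he]; exact R_rung hk 0
    have := (R_iff hg).mp hR
    have h01 : (1 : ZMod (2*k)) = 0 + 1 := (zero_add 1).symm
    rw [h01] at this
    exact not_R_cycle hk 0 this


def phi (hk : 3 < k) : DihedralGroup (2*k) →* graphAut (Gk k) where
  toFun g := match g with
    | .r i => ⟨Equiv.subRight i, rot_mem hk i⟩
    | .sr i => ⟨Equiv.subLeft i, refl_mem hk i⟩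
  map_one' := by
    rw [DihedralGroup.one_def]
    ext x
    simp [Equiv.subRight_apply]
  map_mul' := by
    rintro (i | i) (j | j) <;>
      · ext x
        simp [DihedralGroup.r_mul_r, DihedralGroup.r_mul_sr, DihedralGroup.sr_mul_r,
          DihedralGroup.sr_mul_sr, Equiv.subRight_apply, Equiv.subLeft_apply,
          Equiv.Perm.mul_apply]
        ring

lemma phi_r (hk : 3 < k) (i : ZMod (2*k)) :
    ((phi hk (DihedralGroup.r i) : graphAut (Gk k)) : Equiv.Perm (ZMod (2*k)))
      = Equiv.subRight i := rfl

lemma phi_sr (hk : 3 < k) (i : ZMod (2*k)) :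
    ((phi hk (DihedralGroup.sr i) : graphAut (Gk k)) : Equiv.Perm (ZMod (2*k)))
      = Equiv.subLeft i := rfl

lemma phi_inj (hk : 3 < k) : Function.Injective (phi hk) := by
  rintro (i | i) (j | j) h <;>
    rw [Subtype.ext_iff] at h <;>
    simp only [phi_r, phi_sr] at h <;>
    rw [Equiv.ext_iff] at h
  · have h0 := h 0
    simp only [Equiv.subRight_apply] at h0
    rw [DihedralGroup.r.injEq]
    linear_combination -h0
  · exfalso
    have h0 := h 0
    have h1 := h 1
    simp only [Equiv.subRight_apply, Equiv.subLeft_apply] at h0 h1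
    exact two_ne hk (by linear_combination h1 - h0)
  · exfalso
    have h0 := h 0
    have h1 := h 1
    simp only [Equiv.subRight_apply, Equiv.subLeft_apply] at h0 h1
    exact two_ne hk (by linear_combination h0 - h1)
  · have h0 := h 0
    simp only [Equiv.subLeft_apply] at h0
    rw [DihedralGroup.sr.injEq]
    linear_combination h0

lemma phi_surj (hk : 3 < k) : Function.Surjective (phi hk) := by
  rintro ⟨f, hf⟩
  rcases classify hk hf with h | h
  · refine ⟨DihedralGroup.r (-(f 0)), ?_⟩
    rw [Subtype.ext_iff, phi_r hk]
    ext x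
    simp only [Equiv.subRight_apply]
    rw [h x]
    ring
  · refine ⟨DihedralGroup.sr (f 0), ?_⟩
    rw [Subtype.ext_iff, phi_sr hk]
    ext x
    simp only [Equiv.subLeft_apply]
    rw [h x]

end ML2

end ML

theorem stmt16 (k : ℕ) (hk : 3 < k) :
    Nonempty ((graphAut (cayA (ZMod (2 * k))
        ({1, ((2 * k - 1 : ℕ) : ZMod (2 * k)), ((k : ℕ) : ZMod (2 * k))} :
          Set (ZMod (2 * k))))) ≃* DihedralGroup (2 * k)) := by
  exact ⟨(MulEquiv.ofBijective (ML.ML2.phi hk) ⟨ML.ML2.phi_inj hk, ML.ML2.phi_surj hk⟩).symm⟩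
end

section
/- Let k ≥ 4. The automorphism group of the odd Möbius ladder M_{2k+1} = Cay(ℤ_{2k+1}; {1, 2k, k, k+1}) is isomorphic to the dihedral group of order 2(2k+1). -/
namespace S17

abbrev MG (k : ℕ) : SimpleGraph (ZMod (2*k+1)) :=
  cayA (ZMod (2 * k + 1))
        ({1, ((2 * k : ℕ) : ZMod (2 * k + 1)), ((k : ℕ) : ZMod (2 * k + 1)),
          ((k + 1 : ℕ) : ZMod (2 * k + 1))} : Set (ZMod (2 * k + 1)))

def ι (k : ℕ) (a : ℤ) : ZMod (2*k+1) := (a : ZMod (2*k+1))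

def Dk (k : ℕ) (m : ℤ) : Prop :=
  (2*(k:ℤ)+1) ∣ m - 1 ∨ (2*(k:ℤ)+1) ∣ m + 1 ∨ (2*(k:ℤ)+1) ∣ m - k ∨ (2*(k:ℤ)+1) ∣ m + k

lemma not_dvd {N m : ℤ} (h0 : m ≠ 0) (h1 : -N < m) (h2 : m < N) : ¬ N ∣ m := by
  rintro ⟨c, rfl⟩
  rcases lt_trichotomy c 0 with h | h | h
  · nlinarith
  · subst h; simp at h0
  · nlinarith

lemma ι_eq_iff {k : ℕ} {a b : ℤ} : ι k a = ι k b ↔ (2*(k:ℤ)+1) ∣ (a - b) := by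
  rw [ι, ι, ZMod.intCast_eq_intCast_iff, Int.modEq_iff_dvd, dvd_sub_comm]
  push_cast; rfl

lemma ι_surj (k : ℕ) : Function.Surjective (ι k) := ZMod.intCast_surjective

lemma ι_add (k : ℕ) (a b : ℤ) : ι k a + ι k b = ι k (a + b) := by simp [ι]
lemma ι_sub (k : ℕ) (a b : ℤ) : ι k a - ι k b = ι k (a - b) := by simp [ι]

lemma dvd_congr {N a b : ℤ} (h : N ∣ a - b) : N ∣ a ↔ N ∣ b :=
  ⟨fun h2 => by simpa using dvd_sub h2 h, fun h2 => by simpa using dvd_add h h2⟩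

lemma mem_iff {k : ℕ} {w : ℤ} :
    ι k w ∈ ({1, ((2 * k : ℕ) : ZMod (2 * k + 1)), ((k : ℕ) : ZMod (2 * k + 1)),
          ((k + 1 : ℕ) : ZMod (2 * k + 1))} : Set (ZMod (2 * k + 1))) ↔ Dk k w := by
  have h1 : (1 : ZMod (2*k+1)) = ι k 1 := by simp [ι]
  have h2 : ((2 * k : ℕ) : ZMod (2 * k + 1)) = ι k (2*k) := by simp [ι]
  have h3 : ((k : ℕ) : ZMod (2 * k + 1)) = ι k k := by simp [ι]
  have h4 : ((k + 1 : ℕ) : ZMod (2 * k + 1)) = ι k (k+1) := by simp [ι]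
  simp only [Set.mem_insert_iff, Set.mem_singleton_iff, h1, h2, h3, h4, ι_eq_iff, Dk]
  constructor
  · rintro (h|h|h|h)
    · exact Or.inl h
    · exact Or.inr (Or.inl ((dvd_congr (by ring_nf; exact ⟨1, by ring⟩)).2 h))
    · exact Or.inr (Or.inr (Or.inl h))
    · exact Or.inr (Or.inr (Or.inr ((dvd_congr (by ring_nf; exact ⟨1, by ring⟩)).2 h)))
  · rintro (h|h|h|h)
    · exact Or.inl h
    · exact Or.inr (Or.inl ((dvd_congr (by ring_nf; exact ⟨-1, by ring⟩)).2 h))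
    · exact Or.inr (Or.inr (Or.inl h))
    · exact Or.inr (Or.inr (Or.inr ((dvd_congr (by ring_nf; exact ⟨-1, by ring⟩)).2 h)))

lemma Dk_neg {k : ℕ} {m : ℤ} : Dk k (-m) ↔ Dk k m := by
  have e : ∀ a b : ℤ, a = -b → ((2*(k:ℤ)+1) ∣ a ↔ (2*(k:ℤ)+1) ∣ b) := by
    rintro a b rfl; exact dvd_neg
  simp only [Dk]
  constructor
  · rintro (h|h|h|h)
    · exact Or.inr (Or.inl ((e _ _ (by ring)).1 h))
    · exact Or.inl ((e _ _ (by ring)).1 h)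
    · exact Or.inr (Or.inr (Or.inr ((e _ _ (by ring)).1 h)))
    · exact Or.inr (Or.inr (Or.inl ((e _ _ (by ring)).1 h)))
  · rintro (h|h|h|h)
    · exact Or.inr (Or.inl ((e _ _ (by ring)).1 h))
    · exact Or.inl ((e _ _ (by ring)).1 h)
    · exact Or.inr (Or.inr (Or.inr ((e _ _ (by ring)).1 h)))
    · exact Or.inr (Or.inr (Or.inl ((e _ _ (by ring)).1 h)))

lemma adj_iff {k : ℕ} (hk : 4 ≤ k) {a b : ℤ} :
    (MG k).Adj (ι k a) (ι k b) ↔ Dk k (b - a) := by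
  have hK : (4:ℤ) ≤ (k:ℤ) := by exact_mod_cast hk
  rw [MG, cayA, SimpleGraph.fromRel_adj]
  rw [ι_sub, ι_sub, mem_iff, mem_iff]
  constructor
  · rintro ⟨-, h | h⟩
    · exact h
    · exact Dk_neg.1 (by rw [show -(b-a) = a - b by ring]; exact h)
  · intro h
    refine ⟨?_, Or.inl h⟩
    intro hab
    have hd : (2*(k:ℤ)+1) ∣ (a - b) := ι_eq_iff.1 hab
    rcases h with h|h|h|h
    · refine not_dvd (N := 2*(k:ℤ)+1) (m := (-1:ℤ)) (by omega) (by omega) (by omega) ?_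
      have := dvd_add h hd; convert this using 1; rfl; ring
    · refine not_dvd (N := 2*(k:ℤ)+1) (m := (1:ℤ)) (by omega) (by omega) (by omega) ?_
      have := dvd_add h hd; convert this using 1; rfl; ring
    · refine not_dvd (N := 2*(k:ℤ)+1) (m := (-(k:ℤ))) (by omega) (by omega) (by omega) ?_
      have := dvd_add h hd; convert this using 1; rfl; ring
    · refine not_dvd (N := 2*(k:ℤ)+1) (m := ((k:ℤ))) (by omega) (by omega) (by omega) ?_
      have := dvd_add h hd; convert this using 1; rfl; ring


lemma unique_of_one {k : ℕ} (hk : 4 ≤ k) (a : ℤ) :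
    ∃! z, (MG k).Adj (ι k a) z ∧ (MG k).Adj (ι k (a+1)) z := by
  have hK : (4:ℤ) ≤ (k:ℤ) := by exact_mod_cast hk
  refine ⟨ι k (a - k), ⟨?_, ?_⟩, ?_⟩
  · rw [adj_iff hk]
    exact Or.inr (Or.inr (Or.inr ⟨0, by ring⟩))
  · rw [adj_iff hk]
    exact Or.inr (Or.inr (Or.inl ⟨-1, by ring⟩))
  · intro z hz
    obtain ⟨w, rfl⟩ := ι_surj k z
    obtain ⟨h1, h2⟩ := hz
    rw [adj_iff hk] at h1 h2
    rw [ι_eq_iff]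
    rcases h1 with h1|h1|h1|h1 <;> rcases h2 with h2|h2|h2|h2 <;>
      first
      | (rw [show w - (a - (k:ℤ)) = w - a + (k:ℤ) from by ring]; exact h1)
      | (exact absurd (dvd_sub h1 h2) (not_dvd (by omega) (by omega) (by omega)))

lemma not_unique_k {k : ℕ} (hk : 4 ≤ k) (a : ℤ) :
    ¬ ∃! z, (MG k).Adj (ι k a) z ∧ (MG k).Adj (ι k (a + k)) z := by
  have hK : (4:ℤ) ≤ (k:ℤ) := by exact_mod_cast hk
  rintro ⟨z, -, hu⟩
  have e1 : ι k (a - 1) = z := by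
    refine hu _ ⟨?_, ?_⟩
    · rw [adj_iff hk]; exact Or.inr (Or.inl ⟨0, by ring⟩)
    · rw [adj_iff hk]; exact Or.inr (Or.inr (Or.inl ⟨-1, by ring⟩))
  have e2 : ι k (a + k + 1) = z := by
    refine hu _ ⟨?_, ?_⟩
    · rw [adj_iff hk]; exact Or.inr (Or.inr (Or.inr ⟨1, by ring⟩))
    · rw [adj_iff hk]; exact Or.inl ⟨0, by ring⟩
  have hd := ι_eq_iff.1 (e1.trans e2.symm)
  exact not_dvd (N := 2*(k:ℤ)+1) (m := (a-1) - (a+(k:ℤ)+1)) (by omega) (by omega) (by omega) hd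

lemma existsUnique_comm {α : Sort*} {P Q : α → Prop} (h : ∃! z, P z ∧ Q z) :
    ∃! z, Q z ∧ P z := by
  obtain ⟨z, ⟨h1, h2⟩, hu⟩ := h
  exact ⟨z, ⟨h2, h1⟩, fun y hy => hu y ⟨hy.2, hy.1⟩⟩

lemma mem_graphAut {V : Type*} {G : SimpleGraph V} {f : Equiv.Perm V} :
    f ∈ graphAut G ↔ ∀ a b, G.Adj (f a) (f b) ↔ G.Adj a b := Iff.rfl

lemma aut_existsUnique {V : Type*} {G : SimpleGraph V} {f : Equiv.Perm V}
    (hf : f ∈ graphAut G) {x y : V}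
    (h : ∃! z, G.Adj x z ∧ G.Adj y z) :
    ∃! z, G.Adj (f x) z ∧ G.Adj (f y) z := by
  rw [mem_graphAut] at hf
  obtain ⟨z, ⟨h1, h2⟩, hu⟩ := h
  refine ⟨f z, ⟨(hf x z).2 h1, (hf y z).2 h2⟩, ?_⟩
  intro w hw
  have e : f (f.symm w) = w := f.apply_symm_apply w
  have hx := hf x (f.symm w); rw [e] at hx
  have hy := hf y (f.symm w); rw [e] at hy
  have : f.symm w = z := hu _ ⟨hx.1 hw.1, hy.1 hw.2⟩
  rw [← this, e]

lemma diff_pm_one {k : ℕ} (hk : 4 ≤ k) {f : Equiv.Perm (ZMod (2*k+1))}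
    (hf : f ∈ graphAut (MG k)) (x : ZMod (2*k+1)) :
    f (x+1) - f x = 1 ∨ f (x+1) - f x = -1 := by
  have hK : (4:ℤ) ≤ (k:ℤ) := by exact_mod_cast hk
  have hf' : ∀ a b, (MG k).Adj (f a) (f b) ↔ (MG k).Adj a b := mem_graphAut.1 hf
  obtain ⟨a, rfl⟩ := ι_surj k x
  have hx1 : ι k a + 1 = ι k (a+1) := by simp [ι]
  have hU : ∃! z, (MG k).Adj (f (ι k a)) z ∧ (MG k).Adj (f (ι k a + 1)) z := by
    rw [hx1]; exact aut_existsUnique hf (unique_of_one hk a)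
  obtain ⟨p, hp⟩ := ι_surj k (f (ι k a))
  obtain ⟨q, hq⟩ := ι_surj k (f (ι k a + 1))
  have hadj : (MG k).Adj (f (ι k a)) (f (ι k a + 1)) := by
    rw [hf', hx1, adj_iff hk]
    exact Or.inl ⟨0, by ring⟩
  rw [← hp, ← hq, adj_iff hk] at hadj
  rw [← hp, ← hq] at hU ⊢
  rcases hadj with h|h|h|h
  · left
    rw [ι_sub, show (1:ZMod (2*k+1)) = ι k 1 from by simp [ι], ι_eq_iff]
    exact h
  · right
    rw [ι_sub, show (-1:ZMod (2*k+1)) = ι k (-1) from by simp [ι], ι_eq_iff]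
    rw [show q - p - -1 = q - p + 1 from by ring]
    exact h
  · exfalso
    have e : ι k q = ι k (p + k) := ι_eq_iff.2 (by
      rw [show q - (p + k) = q - p - (k:ℤ) from by ring]; exact h)
    rw [e] at hU
    exact not_unique_k hk p hU
  · exfalso
    have e : ι k p = ι k (q + k) := ι_eq_iff.2 (by
      rw [show p - (q + k) = -(q - p + (k:ℤ)) from by ring]; exact dvd_neg.2 h)
    rw [e] at hU
    exact not_unique_k hk q (existsUnique_comm hU)

lemma two_ne_zero' {k : ℕ} (hk : 4 ≤ k) : (2 : ZMod (2*k+1)) ≠ 0 := by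
  have hK : (4:ℤ) ≤ (k:ℤ) := by exact_mod_cast hk
  have : ι k 2 ≠ ι k 0 := by
    rw [Ne, ι_eq_iff]
    exact not_dvd (by omega) (by omega) (by omega)
  simpa [ι] using this

lemma step_eq {k : ℕ} (hk : 4 ≤ k) {f : Equiv.Perm (ZMod (2*k+1))}
    (hf : f ∈ graphAut (MG k)) (x : ZMod (2*k+1)) :
    f (x+1+1) - f (x+1) = f (x+1) - f x := by
  rcases diff_pm_one hk hf x with h|h <;> rcases diff_pm_one hk hf (x+1) with h'|h'
  · rw [h, h']
  · exfalso
    have e : f (x+1+1) = f x := by linear_combination h + h'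
    have := f.injective e
    exact two_ne_zero' hk (by linear_combination this)
  · exfalso
    have e : f (x+1+1) = f x := by linear_combination h + h'
    have := f.injective e
    exact two_ne_zero' hk (by linear_combination this)
  · rw [h, h']

lemma lin {k : ℕ} (hk : 4 ≤ k) {f : Equiv.Perm (ZMod (2*k+1))}
    (hf : f ∈ graphAut (MG k)) :
    ∀ x, f x = (f 1 - f 0) * x + f 0 := by
  have hstep : ∀ x, f (x+1) - f x = f 1 - f 0 := by
    have key : ∀ m : ℕ, f ((m:ZMod (2*k+1))+1) - f (m:ZMod (2*k+1)) = f 1 - f 0 := by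
      intro m
      induction m with
      | zero => simp
      | succ i ih =>
        push_cast
        rw [← ih]
        exact step_eq hk hf _
    intro x
    have hx : x = ((x.val : ℕ) : ZMod (2*k+1)) := by
      rw [ZMod.natCast_val, ZMod.cast_id]
    rw [hx]; exact key x.val
  have key2 : ∀ m : ℕ, f (m : ZMod (2*k+1)) = (f 1 - f 0) * m + f 0 := by
    intro m
    induction m with
    | zero => simp
    | succ i ih =>
      push_cast
      have hs := hstep (i : ZMod (2*k+1))
      linear_combination hs + ih
  intro x
  have hx : x = ((x.val : ℕ) : ZMod (2*k+1)) := by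
    rw [ZMod.natCast_val, ZMod.cast_id]
  rw [hx]; exact key2 x.val

def refl' (k : ℕ) (i : ZMod (2*k+1)) : Equiv.Perm (ZMod (2*k+1)) where
  toFun x := i - x
  invFun x := i - x
  left_inv x := by simp
  right_inv x := by simp

def ψ (k : ℕ) : DihedralGroup (2*k+1) →* Equiv.Perm (ZMod (2*k+1)) where
  toFun g := match g with
    | .r i => Equiv.addRight i
    | .sr i => refl' k (-i)
  map_one' := by
    rw [DihedralGroup.one_def]; ext x; simp
  map_mul' := by
    rintro (i|i) (j|j) <;> ext x <;>
      simp [DihedralGroup.r_mul_r, DihedralGroup.r_mul_sr, DihedralGroup.sr_mul_r,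
        DihedralGroup.sr_mul_sr, refl', Equiv.Perm.mul_apply, Equiv.coe_fn_mk] <;>
      ring

lemma psi_r_apply (k : ℕ) (i x : ZMod (2*k+1)) : ψ k (.r i) x = x + i := rfl
lemma psi_sr_apply (k : ℕ) (i x : ZMod (2*k+1)) : ψ k (.sr i) x = -i - x := rfl

lemma psi_mem {k : ℕ} (hk : 4 ≤ k) (g : DihedralGroup (2*k+1)) :
    ψ k g ∈ graphAut (MG k) := by
  rw [mem_graphAut]
  cases g with
  | r i =>
    intro a b
    obtain ⟨p, rfl⟩ := ι_surj k a
    obtain ⟨q, rfl⟩ := ι_surj k b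
    obtain ⟨t, rfl⟩ := ι_surj k i
    rw [psi_r_apply, psi_r_apply, ι_add, ι_add, adj_iff hk, adj_iff hk,
      show (q + t) - (p + t) = q - p from by ring]
  | sr i =>
    intro a b
    obtain ⟨p, rfl⟩ := ι_surj k a
    obtain ⟨q, rfl⟩ := ι_surj k b
    obtain ⟨t, rfl⟩ := ι_surj k i
    have hneg : -ι k t = ι k (-t) := by simp [ι]
    rw [psi_sr_apply, psi_sr_apply, hneg, ι_sub, ι_sub, adj_iff hk, adj_iff hk,
      show (-t - q) - (-t - p) = -(q - p) from by ring]
    exact Dk_neg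

lemma psi_inj {k : ℕ} (hk : 4 ≤ k) : Function.Injective (ψ k) := by
  rw [injective_iff_map_eq_one]
  rintro (i|i) h
  · have h0 := Equiv.ext_iff.1 h 0
    rw [psi_r_apply] at h0
    simp only [Equiv.Perm.one_apply, zero_add] at h0
    rw [h0]
    exact DihedralGroup.one_def.symm
  · exfalso
    have h0 := Equiv.ext_iff.1 h 0
    have h1 := Equiv.ext_iff.1 h 1
    rw [psi_sr_apply] at h0 h1
    simp only [Equiv.Perm.one_apply, sub_zero] at h0 h1
    rw [h0] at h1
    exact two_ne_zero' hk (by linear_combination - h1)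

lemma range_eq {k : ℕ} (hk : 4 ≤ k) : (ψ k).range = graphAut (MG k) := by
  apply le_antisymm
  · rintro f ⟨g, rfl⟩
    exact psi_mem hk g
  · intro f hf
    have hlin := lin hk hf
    have hd := diff_pm_one hk hf 0
    rw [zero_add] at hd
    rcases hd with h|h
    · refine ⟨.r (f 0), ?_⟩
      ext x
      rw [psi_r_apply, hlin x, h]
      ring
    · refine ⟨.sr (-(f 0)), ?_⟩
      ext x
      rw [psi_sr_apply, hlin x, h]
      ring

end S17

theorem stmt17 (k : ℕ) (hk : 4 ≤ k) :
    Nonempty ((graphAut (cayA (ZMod (2 * k + 1))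
        ({1, ((2 * k : ℕ) : ZMod (2 * k + 1)), ((k : ℕ) : ZMod (2 * k + 1)),
          ((k + 1 : ℕ) : ZMod (2 * k + 1))} : Set (ZMod (2 * k + 1))))) ≃*
      DihedralGroup (2 * k + 1)) :=
  ⟨(MulEquiv.subgroupCongr (S17.range_eq hk).symm).trans
    (MonoidHom.ofInjective (S17.psi_inj hk)).symm⟩
end
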